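/- arXiv:2003.07060 — 9 statements merged into one kernel-verified Lean document; each statement's English description precedes it below -/
import Mathlib

section
/- Suppose each of n agents has a matroid rank valuation v_i on subsets of a finite set O of items. Let A be an allocation such that agent i envies agent j up to more than 1 item (i.e. A_j ≠ ∅ and v_i(A_i) < v_i(A_j ∖ {o}) for every o ∈ A_j) and the bundle A_j is clean for agent j. Then v_j(A_j) ≥ v_i(A_i) + 2. -/
private lemma val_le_card {O : Type*} [DecidableEq O]
    (w : Finset O → ℤ) (h0 : w ∅ = 0)
    (hbin : ∀ (S : Finset O) (o : O), o ∉ S →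
      w (insert o S) - w S = 0 ∨ w (insert o S) - w S = 1) :
    ∀ S : Finset O, w S ≤ (S.card : ℤ) := by
  intro S
  induction S using Finset.induction_on with
  | empty => simp [h0]
  | @insert o S ho ih =>
    have := hbin S o ho
    rw [Finset.card_insert_of_notMem ho]
    push_cast
    rcases this with h | h <;> omega

private lemma clean_ge_card {O : Type*} [DecidableEq O]
    (w : Finset O → ℤ) (h0 : w ∅ = 0)
    (hsub : ∀ (S T : Finset O), S ⊆ T → ∀ o ∉ T,
      w (insert o T) - w T ≤ w (insert o S) - w S) :
    ∀ S : Finset O, (∀ o ∈ S, 0 < w S - w (S \ {o})) → (S.card : ℤ) ≤ w S := by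
  intro S
  induction S using Finset.strongInduction with
  | _ S IH =>
    intro hcl
    rcases S.eq_empty_or_nonempty with rfl | ⟨o, ho⟩
    · simp [h0]
    · have hss : S.erase o ⊂ S := Finset.erase_ssubset ho
      have hclean' : ∀ o' ∈ S.erase o, 0 < w (S.erase o) - w (S.erase o \ {o'}) := by
        intro o' ho'
        obtain ⟨hne', hoS⟩ := Finset.mem_erase.mp ho'
        have hsubset : (S.erase o).erase o' ⊆ S.erase o' := by
          intro x hx
          simp only [Finset.mem_erase] at hx ⊢
          exact ⟨hx.1, hx.2.2⟩
        have hnot : o' ∉ S.erase o' := Finset.notMem_erase _ _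
        have h1 : insert o' (S.erase o') = S := Finset.insert_erase hoS
        have h2 : insert o' ((S.erase o).erase o') = S.erase o :=
          Finset.insert_erase ho'
        have := hsub ((S.erase o).erase o') (S.erase o') hsubset o' hnot
        rw [h1, h2] at this
        have hc := hcl o' hoS
        rw [Finset.sdiff_singleton_eq_erase] at hc
        rw [Finset.sdiff_singleton_eq_erase]
        omega
      have hIH := IH (S.erase o) hss hclean'
      have hc := hcl o ho
      rw [Finset.sdiff_singleton_eq_erase] at hc
      have hcard : S.card = (S.erase o).card + 1 := (Finset.card_erase_add_one ho).symm
      rw [hcard]; push_cast; linarith [hIH, hc]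

/-- For matroid rank valuations, if agent `i` envies agent `j`
up to more than one item and `A j` is clean for `j`, then
`v j (A j) ≥ v i (A i) + 2`. -/
theorem envy_up_to_more_than_one_gap
    {O : Type*} [DecidableEq O] [Fintype O] {n : ℕ}
    (v : Fin n → Finset O → ℤ)
    (h0 : ∀ i, v i ∅ = 0)
    (hbin : ∀ i (S : Finset O) (o : O), o ∉ S →
      v i (insert o S) - v i S = 0 ∨ v i (insert o S) - v i S = 1)
    (hsub : ∀ i (S T : Finset O), S ⊆ T → ∀ o ∉ T,
      v i (insert o T) - v i T ≤ v i (insert o S) - v i S)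
    (A : Fin n → Finset O)
    (hdisj : ∀ i j, i ≠ j → Disjoint (A i) (A j))
    (i j : Fin n)
    (hne : (A j).Nonempty)
    (henvy : ∀ o ∈ A j, v i (A i) < v i (A j \ {o}))
    (hclean : ∀ o ∈ A j, 0 < v j (A j) - v j (A j \ {o})) :
    v i (A i) + 2 ≤ v j (A j) := by
  obtain ⟨o, ho⟩ := hne
  have h1 : v i (A i) < v i (A j \ {o}) := henvy o ho
  have h2 : v i (A j \ {o}) ≤ ((A j \ {o}).card : ℤ) :=
    val_le_card (v i) (h0 i) (hbin i) _
  have h3 : ((A j).card : ℤ) ≤ v j (A j) :=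
    clean_ge_card (v j) (h0 j) (hsub j) _ hclean
  have hcard : (A j \ {o}).card + 1 = (A j).card := by
    rw [Finset.sdiff_singleton_eq_erase, Finset.card_erase_of_mem ho]
    have := Finset.card_pos.mpr ⟨o, ho⟩
    omega
  have : ((A j \ {o}).card : ℤ) + 1 = ((A j).card : ℤ) := by exact_mod_cast hcard
  omega
end

section
/- Suppose each of n agents has a matroid rank valuation v_i on subsets of a finite set O of items. Then every Pareto optimal allocation is utilitarian optimal. -/
/-- An allocation: bundles are pairwise disjoint. -/
def IsAlloc {O : Type*} [DecidableEq O] {n : ℕ} (A : Fin n → Finset O) : Prop :=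
  ∀ i j, i ≠ j → Disjoint (A i) (A j)

/-- Utilitarian social welfare. -/
def USW {O : Type*} {n : ℕ} (v : Fin n → Finset O → ℤ)
    (A : Fin n → Finset O) : ℤ :=
  ∑ i, v i (A i)

/-- `B` Pareto dominates `A`. -/
def ParetoDom {O : Type*} {n : ℕ} (v : Fin n → Finset O → ℤ)
    (B A : Fin n → Finset O) : Prop :=
  (∀ i, v i (A i) ≤ v i (B i)) ∧ ∃ j, v j (A j) < v j (B j)

/-!
Among all allocations pick `B` maximising welfare and, secondarily, its overlap `∑ i, #(A i ∩ B i)`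
with `A`. Were `USW v B > USW v A`, Pareto optimality of `A` would give an agent `k` with
`v k (B k) < v k (A k)`, and the matroid exchange property an item `o ∈ A k \ B k` of marginal
value `1` to `k` at `B k`. Handing `o` to `k` costs its previous holder at most `1`, so welfare does
not drop, while the overlap grows (`o` belongs to `A k` only): this contradicts the choice of `B`.
Hence every allocation has welfare at most `USW v B ≤ USW v A`.
-/

open Finset

section Valuation

variable {α : Type*} [DecidableEq α]

def HasBinaryMarginals (f : Finset α → ℤ) : Prop :=
  ∀ (S : Finset α) (o : α), o ∉ S → f (insert o S) - f S = 0 ∨ f (insert o S) - f S = 1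

def IsSubmodular (f : Finset α → ℤ) : Prop :=
  ∀ S T : Finset α, S ⊆ T → ∀ o ∉ T, f (insert o T) - f T ≤ f (insert o S) - f S

theorem HasBinaryMarginals.monotone {f : Finset α → ℤ} (hf : HasBinaryMarginals f) :
    Monotone f :=
  monotone_iff_forall_le_insert.2 fun S o ho => by rcases hf S o ho with h | h <;> omega

theorem HasBinaryMarginals.le_erase_add_one {f : Finset α → ℤ} (hf : HasBinaryMarginals f)
    {S : Finset α} {o : α} (ho : o ∈ S) : f S ≤ f (S.erase o) + 1 := by
  have h := hf (S.erase o) o (notMem_erase o S)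
  rw [insert_erase ho] at h
  omega

theorem IsSubmodular.le_add_sum_marginal {f : Finset α → ℤ} (hf : IsSubmodular f)
    (X T : Finset α) : f (X ∪ T) ≤ f X + ∑ o ∈ T, (f (insert o X) - f X) := by
  induction T using Finset.induction_on with
  | empty => simp
  | @insert a T ha ih =>
    rw [sum_insert ha, union_insert]
    by_cases haX : a ∈ X
    · rw [insert_eq_of_mem (mem_union_left T haX), insert_eq_of_mem haX]
      linarith
    · linarith [hf X (X ∪ T) subset_union_left a (by simp [haX, ha])]

theorem IsSubmodular.exists_lt_insert {f : Finset α → ℤ} (hsub : IsSubmodular f)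
    (hmono : Monotone f) {X Y : Finset α} (h : f X < f Y) :
    ∃ o ∈ Y, o ∉ X ∧ f X < f (insert o X) := by
  by_contra! hc
  have hmarginal : ∑ o ∈ Y, (f (insert o X) - f X) ≤ 0 := sum_nonpos fun o ho => by
    by_cases hoX : o ∈ X
    · simp [insert_eq_of_mem hoX]
    · linarith [hc o ho hoX]
  linarith [hsub.le_add_sum_marginal X Y, hmono (subset_union_right : Y ⊆ X ∪ Y)]

end Valuation

theorem Fintype.sum_le_sum_of_pair_le {ι M : Type*} [Fintype ι] [DecidableEq ι] [AddCommMonoid M]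
    [PartialOrder M] [IsOrderedAddMonoid M] {f g : ι → M} {k m : ι} (hkm : k ≠ m)
    (hpair : f k + f m ≤ g k + g m) (hle : ∀ i, i ≠ k → i ≠ m → f i ≤ g i) :
    ∑ i, f i ≤ ∑ i, g i := by
  rw [← sum_add_sum_compl {k, m} f, ← sum_add_sum_compl {k, m} g, sum_pair hkm, sum_pair hkm]
  gcongr with i hi
  simp only [mem_compl, mem_insert, mem_singleton, not_or] at hi
  exact hle i hi.1 hi.2

section Allocation

variable {O : Type*} [DecidableEq O] {n : ℕ}

theorem exists_isAlloc_forall_le [Fintype O] {β : Type*} [LinearOrder β]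
    (f : (Fin n → Finset O) → β) : ∃ B, IsAlloc B ∧ ∀ C, IsAlloc C → f C ≤ f B := by
  classical
  have hempty : IsAlloc fun _ : Fin n => (∅ : Finset O) := fun _ _ _ => disjoint_empty_left _
  obtain ⟨B, hB, hmax⟩ := exists_max_image {C | IsAlloc C} f ⟨_, mem_filter.2 ⟨mem_univ _, hempty⟩⟩
  exact ⟨B, (mem_filter.1 hB).2, fun C hC => hmax C (mem_filter.2 ⟨mem_univ _, hC⟩)⟩

def reassign (B : Fin n → Finset O) (o : O) (k : Fin n) : Fin n → Finset O :=
  fun i => if i = k then insert o (B i) else (B i).erase o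

theorem reassign_self (B : Fin n → Finset O) (o : O) (k : Fin n) :
    reassign B o k k = insert o (B k) := if_pos rfl

theorem reassign_of_ne {B : Fin n → Finset O} {o : O} {k i : Fin n} (hik : i ≠ k) :
    reassign B o k i = (B i).erase o := if_neg hik

theorem mem_reassign_self_iff {B : Fin n → Finset O} {o : O} {k i : Fin n} :
    o ∈ reassign B o k i ↔ i = k := by
  by_cases hik : i = k
  · simp [hik, reassign_self]
  · simp [hik, reassign_of_ne hik]

theorem mem_reassign_iff_of_ne {B : Fin n → Finset O} {o x : O} {k i : Fin n} (hxo : x ≠ o) :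
    x ∈ reassign B o k i ↔ x ∈ B i := by
  by_cases hik : i = k
  · simp [hik, reassign_self, hxo]
  · simp [reassign_of_ne hik, hxo]

theorem IsAlloc.reassign {B : Fin n → Finset O} (hB : IsAlloc B) (o : O) (k : Fin n) :
    IsAlloc (reassign B o k) := by
  intro i j hij
  rw [disjoint_left]
  intro x hxi hxj
  by_cases hxo : x = o
  · subst hxo
    exact hij ((mem_reassign_self_iff.1 hxi).trans (mem_reassign_self_iff.1 hxj).symm)
  · exact disjoint_left.1 (hB i j hij) ((mem_reassign_iff_of_ne hxo).1 hxi)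
      ((mem_reassign_iff_of_ne hxo).1 hxj)

theorem usw_le_usw_reassign {v : Fin n → Finset O → ℤ} (hbin : ∀ i, HasBinaryMarginals (v i))
    {B : Fin n → Finset O} (hB : IsAlloc B) {o : O} {k : Fin n}
    (hgain : v k (B k) < v k (insert o (B k))) : USW v B ≤ USW v (reassign B o k) := by
  have hoB : o ∉ B k := fun h => by rw [insert_eq_of_mem h] at hgain; exact hgain.false
  by_cases hheld : ∃ m, o ∈ B m
  · obtain ⟨m, hom⟩ := hheld
    have hkm : k ≠ m := by rintro rfl; exact hoB hom
    refine Fintype.sum_le_sum_of_pair_le hkm ?_ fun i hik him => ?_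
    · rw [reassign_self, reassign_of_ne hkm.symm]
      linarith [(hbin m).le_erase_add_one hom]
    · have hoi : o ∉ B i := fun h => disjoint_left.1 (hB i m him) h hom
      rw [reassign_of_ne hik, erase_eq_of_notMem hoi]
  · push Not at hheld
    refine sum_le_sum fun i _ => ?_
    by_cases hik : i = k
    · subst hik
      rw [reassign_self]
      exact hgain.le
    · rw [reassign_of_ne hik, erase_eq_of_notMem (hheld i)]

def overlap (A C : Fin n → Finset O) : ℕ :=
  ∑ i, #(A i ∩ C i)

theorem overlap_lt_overlap_reassign {A B : Fin n → Finset O} (hA : IsAlloc A) {o : O} {k : Fin n}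
    (hoA : o ∈ A k) (hoB : o ∉ B k) : overlap A B < overlap A (reassign B o k) := by
  refine sum_lt_sum (fun i _ => ?_) ⟨k, mem_univ k, ?_⟩
  · by_cases hik : i = k
    · subst hik
      rw [reassign_self]
      exact card_le_card (inter_subset_inter_left (subset_insert o (B i)))
    · have hoi : o ∉ A i := fun h => disjoint_left.1 (hA k i (Ne.symm hik)) hoA h
      rw [reassign_of_ne hik, inter_erase, erase_eq_of_notMem (fun h => hoi (mem_inter.1 h).1)]
  · rw [reassign_self, inter_insert_of_mem hoA, card_insert_of_notMem fun h => hoB (mem_inter.1 h).2]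
    exact Nat.lt_succ_self _

def welfarePotential (v : Fin n → Finset O → ℤ) (A C : Fin n → Finset O) : ℤ ×ₗ ℕ :=
  toLex (USW v C, overlap A C)

theorem exists_welfarePotential_lt {v : Fin n → Finset O → ℤ}
    (hbin : ∀ i, HasBinaryMarginals (v i)) (hsub : ∀ i, IsSubmodular (v i))
    {A B : Fin n → Finset O} (hA : IsAlloc A) (hB : IsAlloc B) {k : Fin n}
    (hk : v k (B k) < v k (A k)) :
    ∃ B', IsAlloc B' ∧ welfarePotential v A B < welfarePotential v A B' := by
  obtain ⟨o, hoA, hoB, hgain⟩ := (hsub k).exists_lt_insert (hbin k).monotone hk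
  exact ⟨reassign B o k, hB.reassign o k, Prod.Lex.toLex_lt_toLex'.2
    ⟨usw_le_usw_reassign hbin hB hgain, fun _ => overlap_lt_overlap_reassign hA hoA hoB⟩⟩

theorem usw_le_of_forall_welfarePotential_le {v : Fin n → Finset O → ℤ}
    (hbin : ∀ i, HasBinaryMarginals (v i)) (hsub : ∀ i, IsSubmodular (v i))
    {A B : Fin n → Finset O} (hA : IsAlloc A)
    (hPO : ¬ ∃ B : Fin n → Finset O, IsAlloc B ∧ ParetoDom v B A) (hB : IsAlloc B)
    (hmax : ∀ C, IsAlloc C → welfarePotential v A C ≤ welfarePotential v A B) :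
    USW v B ≤ USW v A := by
  by_contra! hlt
  by_cases hdom : ∀ i, v i (A i) ≤ v i (B i)
  · obtain ⟨j, -, hj⟩ := exists_lt_of_sum_lt hlt
    exact hPO ⟨B, hB, hdom, j, hj⟩
  · push Not at hdom
    obtain ⟨k, hk⟩ := hdom
    obtain ⟨B', hB', hlt'⟩ := exists_welfarePotential_lt hbin hsub hA hB hk
    exact (hmax B' hB').not_gt hlt'

end Allocation

theorem paretoOpt_implies_utilOpt_general
    {O : Type*} [DecidableEq O] [Fintype O] {n : ℕ}
    (v : Fin n → Finset O → ℤ)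
    (hbin : ∀ i (S : Finset O) (o : O), o ∉ S →
      v i (insert o S) - v i S = 0 ∨ v i (insert o S) - v i S = 1)
    (hsub : ∀ i (S T : Finset O), S ⊆ T → ∀ o ∉ T,
      v i (insert o T) - v i T ≤ v i (insert o S) - v i S)
    (A : Fin n → Finset O)
    (hA : IsAlloc A)
    (hPO : ¬ ∃ B : Fin n → Finset O, IsAlloc B ∧ ParetoDom v B A) :
    ∀ B : Fin n → Finset O, IsAlloc B → USW v B ≤ USW v A := by
  intro C hC
  obtain ⟨B, hB, hmax⟩ := exists_isAlloc_forall_le (welfarePotential v A)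
  calc USW v C ≤ USW v B := (Prod.Lex.toLex_le_toLex'.1 (hmax C hC)).1
    _ ≤ USW v A := usw_le_of_forall_welfarePotential_le hbin hsub hA hPO hB hmax

/-- For matroid rank valuations, any Pareto optimal allocation
is utilitarian optimal. -/
theorem paretoOpt_implies_utilOpt
    {O : Type*} [DecidableEq O] [Fintype O] {n : ℕ}
    (v : Fin n → Finset O → ℤ)
    (h0 : ∀ i, v i ∅ = 0)
    (hbin : ∀ i (S : Finset O) (o : O), o ∉ S →
      v i (insert o S) - v i S = 0 ∨ v i (insert o S) - v i S = 1)
    (hsub : ∀ i (S T : Finset O), S ⊆ T → ∀ o ∉ T,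
      v i (insert o T) - v i T ≤ v i (insert o S) - v i S)
    (A : Fin n → Finset O)
    (hA : IsAlloc A)
    (hPO : ¬ ∃ B : Fin n → Finset O, IsAlloc B ∧ ParetoDom v B A) :
    ∀ B : Fin n → Finset O, IsAlloc B → USW v B ≤ USW v A :=
  paretoOpt_implies_utilOpt_general v hbin hsub A hA hPO
end

section
/- Suppose each of n agents has a matroid rank valuation v_i on subsets of a finite set O of items. Then there exists an allocation A that is simultaneously utilitarian optimal and envy-free up to one good (EF1). -/
/-- Envy-freeness up to one good. -/
def EF1 {O : Type*} [DecidableEq O] {n : ℕ} (v : Fin n → Finset O → ℤ)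
    (A : Fin n → Finset O) : Prop :=
  ∀ i j, v i (A j) ≤ v i (A i) ∨ ∃ o ∈ A j, v i (A j \ {o}) ≤ v i (A i)

/-!
Among the utilitarian-optimal allocations that are clean (each bundle independent for its owner,
obtained by shrinking every bundle to a basis), pick one minimising `∑ k, |A k|²`. If agent `i`
envied `j` even after the removal of any good `o`, then
`|A i| = v i (A i) < v i (A j \ {o}) ≤ |A j| - 1`, and by augmentation some `o ∈ A j` raises
`v i` by one. Moving that `o` from `j` to `i` cannot raise the welfare, so `o` was worth exactly one
to `j`; the new allocation is again clean and optimal, but its sum of squares is smaller since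
`|A j| ≥ |A i| + 2`.
-/

open Finset

section RankFunction

variable {O : Type*} [DecidableEq O] {v : Finset O → ℤ}

def HasBinaryGains (v : Finset O → ℤ) : Prop :=
  ∀ (S : Finset O) (o : O), o ∉ S → v (insert o S) - v S = 0 ∨ v (insert o S) - v S = 1

def HasDiminishingGains (v : Finset O → ℤ) : Prop :=
  ∀ (S T : Finset O), S ⊆ T → ∀ o ∉ T, v (insert o T) - v T ≤ v (insert o S) - v S

namespace HasBinaryGains

theorem le_insert (hv : HasBinaryGains v) (S : Finset O) (o : O) : v S ≤ v (insert o S) := by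
  by_cases ho : o ∈ S
  · rw [insert_eq_of_mem ho]
  · rcases hv S o ho with h | h <;> omega

theorem insert_le_add_one (hv : HasBinaryGains v) (S : Finset O) (o : O) :
    v (insert o S) ≤ v S + 1 := by
  by_cases ho : o ∈ S
  · rw [insert_eq_of_mem ho]; omega
  · rcases hv S o ho with h | h <;> omega

theorem monotone (hv : HasBinaryGains v) : Monotone v := by
  intro S T hST
  have h : ∀ D : Finset O, v S ≤ v (D ∪ S) := by
    intro D
    induction D using Finset.induction_on with
    | empty => simp
    | insert a D _ ih => exact ih.trans (by rw [insert_union]; exact hv.le_insert _ a)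
  simpa [sdiff_union_of_subset hST] using h (T \ S)

theorem le_card (hv : HasBinaryGains v) (h0 : v ∅ = 0) (S : Finset O) : v S ≤ #S := by
  induction S using Finset.induction_on with
  | empty => simp [h0]
  | insert a S ha ih =>
    rw [card_insert_of_notMem ha]
    push_cast
    linarith [hv.insert_le_add_one S a]

end HasBinaryGains

theorem HasDiminishingGains.union_le_of_forall_insert_le (hv : HasDiminishingGains v)
    {A B : Finset O} (hB : ∀ o ∈ B, o ∉ A → v (insert o A) ≤ v A) :
    v (A ∪ B) ≤ v A := by
  induction B using Finset.induction_on with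
  | empty => simp
  | insert a D _ ih =>
    have ih := ih fun o ho => hB o (mem_insert_of_mem ho)
    rw [union_insert]
    by_cases ha : a ∈ A ∪ D
    · rwa [insert_eq_of_mem ha]
    · have haA : a ∉ A := fun h => ha (mem_union_left D h)
      have := hv A (A ∪ D) subset_union_left a ha
      linarith [hB a (mem_insert_self a D) haA]

/-- The augmentation property of matroids. -/
theorem HasBinaryGains.exists_insert_eq_add_one (hb : HasBinaryGains v)
    (hs : HasDiminishingGains v) {A B : Finset O} (h : v A < v B) :
    ∃ o ∈ B, o ∉ A ∧ v (insert o A) = v A + 1 := by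
  by_contra! hc
  have hunion : v (A ∪ B) ≤ v A := hs.union_le_of_forall_insert_le fun o hoB hoA => by
    rcases hb A o hoA with h | h
    · omega
    · exact absurd (by omega) (hc o hoB hoA)
  linarith [hb.monotone (subset_union_right : B ⊆ A ∪ B)]

theorem HasBinaryGains.exists_basis (hb : HasBinaryGains v) (hs : HasDiminishingGains v)
    (h0 : v ∅ = 0) (S : Finset O) : ∃ T ⊆ S, v T = v S ∧ v T = #T := by
  obtain ⟨T, ⟨hTS, hT⟩, hmax⟩ := Set.exists_max_image {T | T ⊆ S ∧ v T = #T} card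
    (S.powerset.finite_toSet.subset fun T hT => mem_powerset.2 hT.1)
    ⟨∅, empty_subset S, by simp [h0]⟩
  refine ⟨T, hTS, ?_, hT⟩
  by_contra hne
  obtain ⟨o, hoS, hoT, hgain⟩ :=
    hb.exists_insert_eq_add_one hs (lt_of_le_of_ne (hb.monotone hTS) hne)
  have := hmax (insert o T)
    ⟨insert_subset hoS hTS, by rw [card_insert_of_notMem hoT]; push_cast; omega⟩
  rw [card_insert_of_notMem hoT] at this
  omega

end RankFunction

theorem Fintype.sum_apply_update {ι α M : Type*} [Fintype ι] [DecidableEq ι] [AddCommGroup M]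
    (f : ι → α → M) (A : ι → α) (i : ι) (a : α) :
    ∑ k, f k (Function.update A i a k) = ∑ k, f k (A k) - f i (A i) + f i a := by
  simp_rw [Function.apply_update f]
  rw [sum_update_of_mem (mem_univ i), sdiff_singleton_eq_erase,
    ← add_sum_erase univ (fun k => f k (A k)) (mem_univ i)]
  abel

section Allocation

variable {O : Type*} [DecidableEq O] {n : ℕ} {v : Fin n → Finset O → ℤ}

def IsUtilitarianOptimal (v : Fin n → Finset O → ℤ) (A : Fin n → Finset O) : Prop :=
  IsAlloc A ∧ ∀ B : Fin n → Finset O, IsAlloc B → USW v B ≤ USW v A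

/-- Every bundle is independent in its owner's matroid. -/
def IsClean (v : Fin n → Finset O → ℤ) (A : Fin n → Finset O) : Prop :=
  ∀ i, v i (A i) = #(A i)

def cardSqSum (A : Fin n → Finset O) : ℤ :=
  ∑ k, (#(A k) : ℤ) ^ 2

def moveItem (A : Fin n → Finset O) (o : O) (j i : Fin n) : Fin n → Finset O :=
  Function.update (Function.update A j ((A j).erase o)) i (insert o (A i))

theorem IsAlloc.mono {A B : Fin n → Finset O} (hA : IsAlloc A) (hBA : ∀ k, B k ⊆ A k) :
    IsAlloc B := fun k l hkl => (hA k l hkl).mono (hBA k) (hBA l)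

theorem IsAlloc.update_insert {A : Fin n → Finset O} (hA : IsAlloc A) {i : Fin n} {o : O}
    (ho : ∀ k ≠ i, o ∉ A k) : IsAlloc (Function.update A i (insert o (A i))) := by
  intro k l hkl
  rcases eq_or_ne k i with rfl | hki
  · simpa [Function.update_of_ne hkl.symm, disjoint_insert_left] using
      ⟨ho l hkl.symm, hA k l hkl⟩
  rcases eq_or_ne l i with rfl | hli
  · simpa [Function.update_of_ne hkl, disjoint_insert_right] using ⟨ho k hkl, hA k l hkl⟩
  simpa [Function.update_of_ne hki, Function.update_of_ne hli] using hA k l hkl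

theorem isAlloc_moveItem {A : Fin n → Finset O} (hA : IsAlloc A) {o : O} {i j : Fin n}
    (ho : o ∈ A j) : IsAlloc (moveItem A o j i) := by
  rcases eq_or_ne i j with rfl | hij
  · simpa [moveItem, insert_eq_of_mem ho] using hA
  set A' := Function.update A j ((A j).erase o)
  have hA' : IsAlloc A' :=
    hA.mono fun k => by rcases eq_or_ne k j with rfl | hk <;> simp [A', *, erase_subset]
  have hA'i : A' i = A i := Function.update_of_ne hij _ _
  rw [moveItem, ← hA'i]
  refine hA'.update_insert fun k hki => ?_
  rcases eq_or_ne k j with rfl | hkj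
  · simp [A']
  · simpa [A', Function.update_of_ne hkj] using disjoint_right.1 (hA k j hkj) ho

theorem sum_apply_moveItem {M : Type*} [AddCommGroup M] (f : Fin n → Finset O → M)
    (A : Fin n → Finset O) (o : O) {i j : Fin n} (hij : i ≠ j) :
    ∑ k, f k (moveItem A o j i k) = ∑ k, f k (A k) + (f i (insert o (A i)) - f i (A i))
      - (f j (A j) - f j ((A j).erase o)) := by
  rw [moveItem, Fintype.sum_apply_update, Fintype.sum_apply_update, Function.update_of_ne hij]
  abel

theorem exists_isUtilitarianOptimal [Fintype O] (v : Fin n → Finset O → ℤ) :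
    ∃ A, IsUtilitarianOptimal v A := by
  obtain ⟨A, hA, hmax⟩ := Set.exists_max_image {A : Fin n → Finset O | IsAlloc A} (USW v)
    (Set.toFinite _) ⟨fun _ => ∅, fun _ _ _ => disjoint_empty_left _⟩
  exact ⟨A, hA, hmax⟩

theorem IsUtilitarianOptimal.exists_isClean (h0 : ∀ i, v i ∅ = 0)
    (hbin : ∀ i, HasBinaryGains (v i)) (hsub : ∀ i, HasDiminishingGains (v i))
    {A : Fin n → Finset O} (hA : IsUtilitarianOptimal v A) :
    ∃ B, IsUtilitarianOptimal v B ∧ IsClean v B := by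
  choose B hBA hval hclean using fun i => (hbin i).exists_basis (hsub i) (h0 i) (A i)
  have hUSW : USW v B = USW v A := sum_congr rfl fun i _ => hval i
  exact ⟨B, ⟨hA.1.mono hBA, hUSW ▸ hA.2⟩, hclean⟩

theorem exists_cardSqSum_lt_of_strong_envy (h0 : ∀ i, v i ∅ = 0)
    (hbin : ∀ i, HasBinaryGains (v i)) (hsub : ∀ i, HasDiminishingGains (v i))
    {A : Fin n → Finset O} (hopt : IsUtilitarianOptimal v A) (hclean : IsClean v A)
    {i j : Fin n} (hij : i ≠ j) (henvy : v i (A i) < v i (A j))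
    (hstrong : ∀ o ∈ A j, v i (A i) < v i ((A j).erase o)) :
    ∃ B, (IsUtilitarianOptimal v B ∧ IsClean v B) ∧ cardSqSum B < cardSqSum A := by
  obtain ⟨o, hoj, hoi, hgain⟩ := (hbin i).exists_insert_eq_add_one (hsub i) henvy
  set B := moveItem A o j i
  have hB : IsAlloc B := isAlloc_moveItem hopt.1 hoj
  have hUSW : USW v B = USW v A + 1 - (v j (A j) - v j ((A j).erase o)) := by
    rw [USW, USW, sum_apply_moveItem v A o hij, hgain]
    ring
  have hloss : v j ((A j).erase o) = v j (A j) - 1 := by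
    have hle := (hbin j).insert_le_add_one ((A j).erase o) o
    rw [insert_erase hoj] at hle
    linarith [hopt.2 B hB]
  have hj : 0 < #(A j) := card_pos.2 ⟨o, hoj⟩
  have hcard : #(A i) + 2 ≤ #(A j) := by
    have hle := (hbin i).le_card (h0 i) ((A j).erase o)
    rw [card_erase_of_mem hoj] at hle
    have := hstrong o hoj
    have := hclean i
    omega
  refine ⟨B, ⟨⟨hB, fun C hC => ?_⟩, fun k => ?_⟩, ?_⟩
  · linarith [hopt.2 C hC]
  · rcases eq_or_ne k i with rfl | hki
    · simp [B, moveItem, hgain, hclean k, card_insert_of_notMem hoi]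
    rcases eq_or_ne k j with rfl | hkj
    · simp only [B, moveItem, Function.update_of_ne hki, Function.update_self, hloss, hclean k,
        card_erase_of_mem hoj]
      omega
    · simp [B, moveItem, hki, hkj, hclean k]
  · rw [cardSqSum, cardSqSum, sum_apply_moveItem (fun _ S => (#S : ℤ) ^ 2) A o hij,
      card_insert_of_notMem hoi, card_erase_of_mem hoj]
    push_cast [Nat.cast_sub hj]
    nlinarith

end Allocation

/-- For matroid rank valuations, there exists an allocation
that is simultaneously utilitarian optimal and EF1. -/
theorem exists_utilOpt_EF1
    {O : Type*} [DecidableEq O] [Fintype O] {n : ℕ}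
    (v : Fin n → Finset O → ℤ)
    (h0 : ∀ i, v i ∅ = 0)
    (hbin : ∀ i (S : Finset O) (o : O), o ∉ S →
      v i (insert o S) - v i S = 0 ∨ v i (insert o S) - v i S = 1)
    (hsub : ∀ i (S T : Finset O), S ⊆ T → ∀ o ∉ T,
      v i (insert o T) - v i T ≤ v i (insert o S) - v i S) :
    ∃ A : Fin n → Finset O, IsAlloc A ∧
      (∀ B : Fin n → Finset O, IsAlloc B → USW v B ≤ USW v A) ∧
      EF1 v A := by
  obtain ⟨A₀, hA₀⟩ := exists_isUtilitarianOptimal v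
  obtain ⟨A, ⟨hopt, hclean⟩, hmin⟩ := Set.exists_min_image
    {A | IsUtilitarianOptimal v A ∧ IsClean v A} cardSqSum (Set.toFinite _)
    (hA₀.exists_isClean h0 hbin hsub)
  refine ⟨A, hopt.1, hopt.2, fun i j => ?_⟩
  simp only [sdiff_singleton_eq_erase]
  by_contra! ⟨henvy, hstrong⟩
  have hij : i ≠ j := by rintro rfl; exact lt_irrefl _ henvy
  obtain ⟨B, hB, hlt⟩ :=
    exists_cardSqSum_lt_of_strong_envy h0 hbin hsub hopt hclean hij henvy hstrong
  exact (hmin B hB).not_gt hlt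
end

section
/- Suppose each of n agents has a matroid rank valuation v_i on subsets of a finite set O of items. Let A be a clean utilitarian optimal allocation such that ∑_{i=1}^n v_i(A_i)² ≤ ∑_{i=1}^n v_i(B_i)² for every utilitarian optimal allocation B. Then A is envy-free up to one good (EF1). -/
section Helpers

variable {O : Type*} [DecidableEq O]

/-- Monotonicity-style growth lemma: adding any set can only increase value. -/
lemma mrf_grow (v : Finset O → ℤ)
    (hbin : ∀ (S : Finset O) (o : O), o ∉ S →
      v (insert o S) - v S = 0 ∨ v (insert o S) - v S = 1)
    (A B : Finset O) : v A ≤ v (A ∪ B) := by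
  induction B using Finset.induction_on with
  | empty => simp
  | @insert b s hb ih =>
    rw [Finset.union_insert]
    by_cases hbs : b ∈ A ∪ s
    · rwa [Finset.insert_eq_self.mpr hbs]
    · rcases hbin (A ∪ s) b hbs with h | h <;> linarith

/-- Value is at most cardinality. -/
lemma mrf_le_card (v : Finset O → ℤ) (h0 : v ∅ = 0)
    (hbin : ∀ (S : Finset O) (o : O), o ∉ S →
      v (insert o S) - v S = 0 ∨ v (insert o S) - v S = 1)
    (S : Finset O) : v S ≤ S.card := by
  induction S using Finset.induction_on with
  | empty => simp [h0]
  | @insert b s hb ih =>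
    rw [Finset.card_insert_of_notMem hb]
    push_cast
    rcases hbin s b hb with h | h <;> linarith

/-- Clean sets have value at least their cardinality. -/
lemma mrf_clean_lb (v : Finset O → ℤ) (h0 : v ∅ = 0)
    (hsub : ∀ (S T : Finset O), S ⊆ T → ∀ o ∉ T,
      v (insert o T) - v T ≤ v (insert o S) - v S) :
    ∀ S : Finset O, (∀ o ∈ S, 0 < v S - v (S \ {o})) → (S.card : ℤ) ≤ v S := by
  intro S
  induction S using Finset.strongInduction with
  | _ S ih =>
    intro hS
    rcases S.eq_empty_or_nonempty with rfl | ⟨o, ho⟩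
    · simp [h0]
    · have hss : S \ {o} ⊂ S :=
        Finset.sdiff_ssubset (Finset.singleton_subset_iff.mpr ho) (Finset.singleton_nonempty o)
      have key : ∀ o' ∈ S \ {o}, 0 < v (S \ {o}) - v ((S \ {o}) \ {o'}) := by
        intro o' ho'
        obtain ⟨ho'S, ho'o⟩ := Finset.mem_sdiff.mp ho'
        have h1 : (S \ {o}) \ {o'} ⊆ S \ {o'} := by
          intro x hx; simp only [Finset.mem_sdiff, Finset.mem_singleton] at hx ⊢; tauto
        have h2 : o' ∉ S \ {o'} := by simp
        have h3 := hsub ((S \ {o}) \ {o'}) (S \ {o'}) h1 o' h2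
        have e1 : insert o' (S \ {o'}) = S := by
          rw [Finset.sdiff_singleton_eq_erase, Finset.insert_erase ho'S]
        have e2 : insert o' ((S \ {o}) \ {o'}) = S \ {o} := by
          rw [Finset.sdiff_singleton_eq_erase, Finset.insert_erase ho']
        rw [e1, e2] at h3
        have h4 := hS o' ho'S
        linarith
      have hlb := ih (S \ {o}) hss key
      have h5 := hS o ho
      have hcard : (S \ {o}).card = S.card - 1 := by
        rw [Finset.sdiff_singleton_eq_erase, Finset.card_erase_of_mem ho]
      have hpos : 1 ≤ S.card := Finset.card_pos.mpr ⟨o, ho⟩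
      have : ((S \ {o}).card : ℤ) = (S.card : ℤ) - 1 := by omega
      omega

/-- Exchange: if no single element of B improves A, then A ∪ B is no better than A. -/
lemma mrf_exchange (v : Finset O → ℤ)
    (hsub : ∀ (S T : Finset O), S ⊆ T → ∀ o ∉ T,
      v (insert o T) - v T ≤ v (insert o S) - v S)
    (A B : Finset O) (hall : ∀ o ∈ B, v (insert o A) ≤ v A) : v (A ∪ B) ≤ v A := by
  induction B using Finset.induction_on with
  | empty => simp
  | @insert b s hb ih =>
    have hih := ih (fun o ho => hall o (Finset.mem_insert_of_mem ho))
    rw [Finset.union_insert]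
    by_cases hbs : b ∈ A ∪ s
    · rwa [Finset.insert_eq_self.mpr hbs]
    · have h1 := hsub A (A ∪ s) Finset.subset_union_left b hbs
      have h2 := hall b (Finset.mem_insert_self b s)
      linarith

end Helpers

/-- For matroid rank valuations, any clean utilitarian optimal
allocation minimizing the sum of squared valuations among all utilitarian
optimal allocations is EF1. -/
theorem clean_utilOpt_min_sum_squares_EF1
    {O : Type*} [DecidableEq O] [Fintype O] {n : ℕ}
    (v : Fin n → Finset O → ℤ)
    (h0 : ∀ i, v i ∅ = 0)
    (hbin : ∀ i (S : Finset O) (o : O), o ∉ S →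
      v i (insert o S) - v i S = 0 ∨ v i (insert o S) - v i S = 1)
    (hsub : ∀ i (S T : Finset O), S ⊆ T → ∀ o ∉ T,
      v i (insert o T) - v i T ≤ v i (insert o S) - v i S)
    (A : Fin n → Finset O)
    (hA : IsAlloc A)
    (hclean : ∀ i, ∀ o ∈ A i, 0 < v i (A i) - v i (A i \ {o}))
    (hopt : ∀ B : Fin n → Finset O, IsAlloc B → USW v B ≤ USW v A)
    (hmin : ∀ B : Fin n → Finset O, IsAlloc B →
      (∀ C : Fin n → Finset O, IsAlloc C → USW v C ≤ USW v B) →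
      ∑ i, (v i (A i)) ^ 2 ≤ ∑ i, (v i (B i)) ^ 2) :
    EF1 v A := by
  by_contra hEF
  unfold EF1 at hEF
  push_neg at hEF
  obtain ⟨i, j, h1, h2⟩ := hEF
  have hij : i ≠ j := by rintro rfl; exact absurd h1 (lt_irrefl _)
  have ha0 : 0 ≤ v i (A i) := by
    have := mrf_grow (v i) (hbin i) ∅ (A i)
    simpa [h0 i] using this
  -- |A j| ≥ v i (A i) + 2
  have hAjcard : v i (A i) + 2 ≤ ((A j).card : ℤ) := by
    by_contra hlt
    push_neg at hlt
    have hub := mrf_le_card (v i) (h0 i) (hbin i) (A j)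
    have hne : (A j).Nonempty := by
      rw [← Finset.card_pos]
      omega
    obtain ⟨o, ho⟩ := hne
    have h3 := h2 o ho
    have h4 := mrf_le_card (v i) (h0 i) (hbin i) (A j \ {o})
    have hpos : 1 ≤ (A j).card := Finset.card_pos.mpr ⟨o, ho⟩
    have h5 : (A j \ {o}).card = (A j).card - 1 := by
      rw [Finset.sdiff_singleton_eq_erase, Finset.card_erase_of_mem ho]
    omega
  -- exchange: find o ∈ A j with positive marginal for i
  have hgrow : v i (A j) ≤ v i (A i ∪ A j) := by
    rw [Finset.union_comm]
    exact mrf_grow (v i) (hbin i) (A j) (A i)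
  have hex : ∃ o ∈ A j, v i (A i) < v i (insert o (A i)) := by
    by_contra hc
    push_neg at hc
    have := mrf_exchange (v i) (hsub i) (A i) (A j) hc
    omega
  obtain ⟨o, ho, hov⟩ := hex
  have hoAi : o ∉ A i := Finset.disjoint_left.mp (hA j i (Ne.symm hij)) ho
  have hins : v i (insert o (A i)) = v i (A i) + 1 := by
    rcases hbin i (A i) o hoAi with h | h <;> omega
  have hbge : v i (A i) + 2 ≤ v j (A j) := by
    have := mrf_clean_lb (v j) (h0 j) (hsub j) (A j) (hclean j)
    omega
  have hrem : v j (A j \ {o}) = v j (A j) - 1 := by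
    have h6 := hclean j o ho
    have h7 : o ∉ A j \ {o} := by simp
    have h8 := hbin j (A j \ {o}) o h7
    have h9 : insert o (A j \ {o}) = A j := by
      rw [Finset.sdiff_singleton_eq_erase, Finset.insert_erase ho]
    rw [h9] at h8
    omega
  -- the transfer allocation
  set B : Fin n → Finset O :=
    fun k => if k = i then insert o (A i) else if k = j then A j \ {o} else A k with hBdef
  have hoAk : ∀ k, k ≠ j → o ∉ A k :=
    fun k hk => Finset.disjoint_left.mp (hA j k (fun h => hk h.symm)) ho
  have hBi : B i = insert o (A i) := by simp [hBdef]
  have hBj : B j = A j \ {o} := by simp [hBdef, Ne.symm hij]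
  have hBo : ∀ k, k ≠ i → k ≠ j → B k = A k := by
    intro k hk1 hk2; simp [hBdef, hk1, hk2]
  have hallocB : IsAlloc B := by
    intro k l hkl
    by_cases hki : k = i
    · by_cases hlj : l = j
      · rw [hki, hlj, hBi, hBj]
        exact Finset.disjoint_insert_left.mpr
          ⟨by simp, (hA i j hij).mono_right Finset.sdiff_subset⟩
      · have hli : l ≠ i := fun h => hkl (hki.trans h.symm)
        rw [hki, hBi, hBo l hli hlj]
        exact Finset.disjoint_insert_left.mpr ⟨hoAk l hlj, hA i l (hki ▸ hkl)⟩
    · by_cases hkj : k = j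
      · by_cases hli : l = i
        · rw [hkj, hli, hBj, hBi]
          exact (Finset.disjoint_insert_left.mpr
            ⟨by simp, (hA i j hij).mono_right Finset.sdiff_subset⟩).symm
        · have hlj : l ≠ j := fun h => hkl (hkj.trans h.symm)
          rw [hkj, hBj, hBo l hli hlj]
          exact (hA j l (hkj ▸ hkl)).mono_left Finset.sdiff_subset
      · by_cases hli : l = i
        · rw [hli, hBo k hki hkj, hBi]
          exact (Finset.disjoint_insert_left.mpr
            ⟨hoAk k hkj, hA i k fun h => hkl (h.symm.trans hli.symm)⟩).symm
        · by_cases hlj : l = j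
          · rw [hlj, hBo k hki hkj, hBj]
            exact ((hA j k fun h => hkl (h.symm.trans hlj.symm)).mono_left
              Finset.sdiff_subset).symm
          · rw [hBo k hki hkj, hBo l hli hlj]
            exact hA k l hkl
  have hvB : ∀ k, v k (B k) =
      v k (A k) + ((if k = i then (1 : ℤ) else 0) + (if k = j then (-1 : ℤ) else 0)) := by
    intro k
    by_cases hki : k = i
    · rw [hki, hBi, hins, if_pos rfl, if_neg hij]; ring
    · by_cases hkj : k = j
      · rw [hkj, hBj, hrem, if_neg (Ne.symm hij), if_pos rfl]; ring
      · rw [hBo k hki hkj, if_neg hki, if_neg hkj]; ring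
  have hUSW : USW v B = USW v A := by
    unfold USW
    rw [Finset.sum_congr rfl (fun k _ => hvB k), Finset.sum_add_distrib,
      Finset.sum_add_distrib, Finset.sum_ite_eq' Finset.univ i,
      Finset.sum_ite_eq' Finset.univ j]
    simp
  have hsqB : ∀ k, (v k (B k)) ^ 2 =
      (v k (A k)) ^ 2 + ((if k = i then 2 * v i (A i) + 1 else 0)
        + (if k = j then -(2 * v j (A j)) + 1 else 0)) := by
    intro k
    by_cases hki : k = i
    · rw [hki, hBi, hins, if_pos rfl, if_neg hij]; ring
    · by_cases hkj : k = j
      · rw [hkj, hBj, hrem, if_neg (Ne.symm hij), if_pos rfl]; ring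
      · rw [hBo k hki hkj, if_neg hki, if_neg hkj]; ring
  have hsq : ∑ k, (v k (B k)) ^ 2 =
      ∑ k, (v k (A k)) ^ 2 + (2 * v i (A i) + 1) + (-(2 * v j (A j)) + 1) := by
    rw [Finset.sum_congr rfl (fun k _ => hsqB k), Finset.sum_add_distrib,
      Finset.sum_add_distrib, Finset.sum_ite_eq' Finset.univ i,
      Finset.sum_ite_eq' Finset.univ j]
    simp [add_assoc]
  have hoptB : ∀ C : Fin n → Finset O, IsAlloc C → USW v C ≤ USW v B := by
    intro C hC; rw [hUSW]; exact hopt C hC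
  have hfin := hmin B hallocB hoptB
  rw [hsq] at hfin
  omega
end

section
/- Suppose each of n agents has a matroid rank valuation v_i on subsets of a finite set O of items. Then an allocation A is leximin if and only if A is a maximum Nash welfare (MNW) allocation. -/
/-- The vector of realized valuations, sorted in non-decreasing order. -/
def sVec {O : Type*} {n : ℕ} (v : Fin n → Finset O → ℤ)
    (A : Fin n → Finset O) : Fin n → ℤ :=
  (fun i => v i (A i)) ∘ Tuple.sort (fun i => v i (A i))

/-- The set of agents with positive realized value. -/
def posAgents {O : Type*} {n : ℕ} (v : Fin n → Finset O → ℤ)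
    (A : Fin n → Finset O) : Finset (Fin n) :=
  Finset.univ.filter fun i => 0 < v i (A i)

/-- Maximum Nash welfare allocation: maximizes the number of agents with
positive value, and among those, maximizes the product of positive values. -/
def IsMNW {O : Type*} [DecidableEq O] {n : ℕ} (v : Fin n → Finset O → ℤ)
    (A : Fin n → Finset O) : Prop :=
  IsAlloc A ∧
  (∀ B : Fin n → Finset O, IsAlloc B → (posAgents v B).card ≤ (posAgents v A).card) ∧
  (∀ B : Fin n → Finset O, IsAlloc B → (posAgents v B).card = (posAgents v A).card →
    ∏ i ∈ posAgents v B, v i (B i) ≤ ∏ i ∈ posAgents v A, v i (A i))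

open Finset

section

variable {O : Type*}

structure IsMatroidRank [DecidableEq O] (r : Finset O → ℤ) : Prop where
  map_empty : r ∅ = 0
  marginal_binary : ∀ (S : Finset O) (o : O), o ∉ S →
    r (insert o S) - r S = 0 ∨ r (insert o S) - r S = 1
  marginal_antitone : ∀ (S T : Finset O), S ⊆ T → ∀ o ∉ T,
    r (insert o T) - r T ≤ r (insert o S) - r S

namespace IsMatroidRank

variable [DecidableEq O] {r : Finset O → ℤ} (hr : IsMatroidRank r)
include hr

lemma le_insert (S : Finset O) (o : O) : r S ≤ r (insert o S) := by
  by_cases ho : o ∈ S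
  · rw [insert_eq_of_mem ho]
  · rcases hr.marginal_binary S o ho with h | h <;> omega

lemma insert_le_add_one (S : Finset O) (o : O) : r (insert o S) ≤ r S + 1 := by
  by_cases ho : o ∈ S
  · rw [insert_eq_of_mem ho]; omega
  · rcases hr.marginal_binary S o ho with h | h <;> omega

lemma le_union (S T : Finset O) : r S ≤ r (S ∪ T) := by
  induction T using Finset.induction_on with
  | empty => simp
  | insert a T _ ih => exact ih.trans (union_insert a S T ▸ hr.le_insert _ a)

lemma mono {S T : Finset O} (hST : S ⊆ T) : r S ≤ r T :=
  union_eq_right.2 hST ▸ hr.le_union S T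

lemma nonneg (S : Finset O) : 0 ≤ r S := hr.map_empty ▸ hr.mono (empty_subset S)

lemma le_erase_add_one (S : Finset O) (o : O) : r S ≤ r (S.erase o) + 1 :=
  (hr.mono (insert_erase_subset o S)).trans (hr.insert_le_add_one _ o)

lemma union_eq_of_forall_insert_eq {S T : Finset O} (hT : ∀ o ∈ T, r (insert o S) = r S) :
    r (S ∪ T) = r S := by
  induction T using Finset.induction_on with
  | empty => simp
  | insert a T _ ih =>
    have hS : r (S ∪ T) = r S := ih fun o ho => hT o (mem_insert_of_mem ho)
    rw [union_insert]
    by_cases haST : a ∈ S ∪ T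
    · rw [insert_eq_of_mem haST, hS]
    · have := hr.marginal_antitone S (S ∪ T) subset_union_left a haST
      have := hr.le_insert (S ∪ T) a
      have := hT a (mem_insert_self a T)
      omega

lemma exists_insert_eq_add_one {S T : Finset O} (hST : r S < r T) :
    ∃ y ∈ T \ S, r (insert y S) = r S + 1 := by
  by_contra! h
  have hspan : ∀ o ∈ T, r (insert o S) = r S := by
    intro o ho
    by_cases hoS : o ∈ S
    · rw [insert_eq_of_mem hoS]
    · rcases hr.marginal_binary S o hoS with h' | h'
      · omega
      · exact absurd (by omega) (h o (mem_sdiff.2 ⟨ho, hoS⟩))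
  have := hr.mono (subset_union_right (s₁ := S) (s₂ := T))
  rw [hr.union_eq_of_forall_insert_eq hspan] at this
  omega

end IsMatroidRank

section Allocation

variable {n : ℕ}

def utility (v : Fin n → Finset O → ℤ) (A : Fin n → Finset O) : Fin n → ℤ := fun i => v i (A i)

variable [DecidableEq O]

def moveTo (A : Fin n → Finset O) (y : O) (σ : Fin n) : Fin n → Finset O :=
  fun i => if i = σ then insert y (A i) else (A i).erase y

lemma isAlloc_moveTo {A : Fin n → Finset O} (hA : IsAlloc A) (y : O) (σ : Fin n) :
    IsAlloc (moveTo A y σ) := by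
  have hσ : ∀ q, q ≠ σ → Disjoint (moveTo A y σ σ) (moveTo A y σ q) := by
    intro q hq
    simp only [moveTo, if_true, if_neg hq, disjoint_insert_left]
    exact ⟨notMem_erase y _, (hA σ q hq.symm).mono_right (erase_subset y _)⟩
  intro p q hpq
  by_cases hp : p = σ
  · subst hp; exact hσ q hpq.symm
  by_cases hq : q = σ
  · subst hq; exact (hσ p hp).symm
  simp only [moveTo, if_neg hp, if_neg hq]
  exact (hA p q hpq).mono (erase_subset y _) (erase_subset y _)

def disagreement (A B : Fin n → Finset O) : ℕ := ∑ i, #(B i \ A i)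

lemma disagreement_moveTo_lt {A B : Fin n → Finset O} (hB : IsAlloc B) {y : O} {σ : Fin n}
    (hy : y ∈ B σ \ A σ) : disagreement (moveTo A y σ) B < disagreement A B := by
  refine sum_lt_sum (fun i _ => card_le_card ?_) ⟨σ, mem_univ σ, card_lt_card ?_⟩
  · by_cases hi : i = σ
    · simp [moveTo, hi, sdiff_insert, erase_subset]
    · have hyi : y ∉ B i := fun h => disjoint_left.1 (hB σ i (Ne.symm hi)) (mem_sdiff.1 hy).1 h
      intro o
      simp only [moveTo, if_neg hi, mem_sdiff, mem_erase]
      exact fun ⟨hoB, hoA⟩ => ⟨hoB, fun h => hoA ⟨fun hoy => hyi (hoy ▸ hoB), h⟩⟩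
  · simpa [moveTo, sdiff_insert] using erase_ssubset hy

variable {v : Fin n → Finset O → ℤ} (hv : ∀ i, IsMatroidRank (v i))
include hv

lemma exists_moveTo_step {A B : Fin n → Finset O} (hA : IsAlloc A) (hB : IsAlloc B) {σ : Fin n}
    (hσ : v σ (A σ) < v σ (B σ)) :
    ∃ A', IsAlloc A' ∧ disagreement A' B < disagreement A B ∧
      (utility v A' = utility v A + Pi.single σ 1 ∨
        ∃ j, utility v A' = utility v A + Pi.single σ 1 - Pi.single j 1) := by
  obtain ⟨y, hy, hgain⟩ := (hv σ).exists_insert_eq_add_one hσ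
  refine ⟨moveTo A y σ, isAlloc_moveTo hA y σ, disagreement_moveTo_lt hB hy, ?_⟩
  have hyσ : y ∉ A σ := (mem_sdiff.1 hy).2
  by_cases hown : ∃ j, y ∈ A j
  · obtain ⟨j, hj⟩ := hown
    have hjσ : j ≠ σ := fun h => hyσ (h ▸ hj)
    have hloss : utility v (moveTo A y σ) = utility v A + Pi.single σ 1
        - Pi.single j (v j (A j) - v j ((A j).erase y)) := by
      funext i
      rcases eq_or_ne i σ with rfl | hiσ
      · simp [utility, moveTo, hgain, hjσ]
      rcases eq_or_ne i j with rfl | hij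
      · simp [utility, moveTo, hiσ]
      have hyi : y ∉ A i := fun hyi => disjoint_left.1 (hA i j hij) hyi hj
      simp [utility, moveTo, hiσ, hij, erase_eq_of_notMem hyi]
    have := (hv j).le_erase_add_one (A j) y
    have := (hv j).mono (erase_subset y (A j))
    obtain h | h : v j (A j) - v j ((A j).erase y) = 0 ∨ v j (A j) - v j ((A j).erase y) = 1 := by
      omega
    · exact Or.inl (by simpa [h] using hloss)
    · exact Or.inr ⟨j, h ▸ hloss⟩
  · simp only [not_exists] at hown
    refine Or.inl (funext fun i => ?_)
    rcases eq_or_ne i σ with rfl | hiσ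
    · simp [utility, moveTo, hgain]
    · simp [utility, moveTo, hiσ, erase_eq_of_notMem (hown i)]

/-- Follow an augmenting path: `σ` takes an item of `B σ` that raises its value, and an owner who
loses value thereby, and is not better off in `A` than in `B`, becomes the next `σ`. -/
theorem exists_exchange {A B : Fin n → Finset O} (hA : IsAlloc A) (hB : IsAlloc B) {σ : Fin n}
    (hσ : v σ (A σ) < v σ (B σ)) :
    ∃ C, IsAlloc C ∧ (utility v C = utility v A + Pi.single σ 1 ∨
      ∃ t, v t (B t) < v t (A t) ∧ utility v C = utility v A + Pi.single σ 1 - Pi.single t 1) := by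
  obtain ⟨A', hA', hlt, hstep | ⟨j, hstep⟩⟩ := exists_moveTo_step hv hA hB hσ
  · exact ⟨A', hA', Or.inl hstep⟩
  have hA'_apply (i : Fin n) :
      v i (A' i) = v i (A i) + (Pi.single σ 1 : Fin n → ℤ) i - (Pi.single j 1 : Fin n → ℤ) i :=
    congrFun hstep i
  by_cases hj : v j (B j) < v j (A j)
  · exact ⟨A', hA', Or.inr ⟨j, hj, hstep⟩⟩
  have hj' : v j (A' j) < v j (B j) := by
    have := hA'_apply j
    simp only [Pi.single_apply, if_true] at this
    split_ifs at this <;> subst_vars <;> omega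
  obtain ⟨C, hC, hCA' | ⟨t, ht, hCA'⟩⟩ := exists_exchange hA' hB hj'
  · exact ⟨C, hC, Or.inl (by rw [hCA', hstep]; abel)⟩
  · refine ⟨C, hC, Or.inr ⟨t, ?_, by rw [hCA', hstep]; abel⟩⟩
    have := hA'_apply t
    simp only [Pi.single_apply] at this
    split_ifs at this with htσ <;> subst_vars <;> omega
termination_by disagreement A B

end Allocation

section Transfer

variable {n : ℕ} {u : Fin n → ℤ} {s t : Fin n}

lemma add_single_sub_single_apply_left (hst : s ≠ t) :
    (u + Pi.single s 1 - Pi.single t 1 : Fin n → ℤ) s = u s + 1 := by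
  simp [hst]

lemma add_single_sub_single_apply_right (hst : s ≠ t) :
    (u + Pi.single s 1 - Pi.single t 1 : Fin n → ℤ) t = u t - 1 := by
  simp [hst.symm]

lemma add_single_sub_single_apply_of_ne {i : Fin n} (hs : i ≠ s) (ht : i ≠ t) :
    (u + Pi.single s 1 - Pi.single t 1 : Fin n → ℤ) i = u i := by
  simp [hs, ht]

end Transfer

section Potential

variable {n : ℕ}

/-- The base `n + 1` makes the potential reverse the lexicographic order of sorted vectors. -/
def potential (u : Fin n → ℤ) : ℚ := ∑ i, ((n : ℚ) + 1) ^ (-u i)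

lemma one_lt_natCast_add_one_of_fin (s : Fin n) : (1 : ℚ) < n + 1 := by
  have := s.pos
  norm_cast
  omega

lemma potential_comp_perm (u : Fin n → ℤ) (σ : Equiv.Perm (Fin n)) :
    potential (u ∘ σ) = potential u :=
  Equiv.sum_comp σ fun i => ((n : ℚ) + 1) ^ (-u i)

lemma potential_antitone : Antitone (potential (n := n)) := fun _ _ h =>
  sum_le_sum fun i _ => zpow_le_zpow_right₀ (by simp) (neg_le_neg (h i))

lemma potential_sub_potential (u w : Fin n → ℤ) :
    potential w - potential u = ∑ i, (((n : ℚ) + 1) ^ (-w i) - ((n : ℚ) + 1) ^ (-u i)) :=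
  (sum_sub_distrib _ _).symm

lemma potential_add_single_lt (u : Fin n → ℤ) (s : Fin n) :
    potential (u + Pi.single s 1) < potential u := by
  have hdiff := potential_sub_potential u (u + Pi.single s 1)
  rw [Fintype.sum_eq_single s fun i hi => by simp [hi]] at hdiff
  have := zpow_lt_zpow_right₀ (one_lt_natCast_add_one_of_fin s) (show -(u s + 1) < -u s by omega)
  simp only [Pi.add_apply, Pi.single_eq_same] at hdiff
  linarith

lemma potential_transfer_sub {s t : Fin n} (hst : s ≠ t) (u : Fin n → ℤ) :
    potential (u + Pi.single s 1 - Pi.single t 1) - potential u =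
      (((n : ℚ) + 1) ^ (-(u s + 1)) - ((n : ℚ) + 1) ^ (-u s))
        + (((n : ℚ) + 1) ^ (-(u t - 1)) - ((n : ℚ) + 1) ^ (-u t)) := by
  rw [potential_sub_potential, Fintype.sum_eq_add s t hst fun i hi => by
    rw [add_single_sub_single_apply_of_ne hi.1 hi.2, sub_self],
    add_single_sub_single_apply_left hst, add_single_sub_single_apply_right hst]

lemma potential_transfer_lt {u : Fin n → ℤ} {s t : Fin n} (hst : u s + 2 ≤ u t) :
    potential (u + Pi.single s 1 - Pi.single t 1) < potential u := by
  have hne : s ≠ t := by rintro rfl; omega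
  have hM := one_lt_natCast_add_one_of_fin s
  have hdiff := potential_transfer_sub hne u
  have hs : ((n : ℚ) + 1) ^ (-u s) = ((n : ℚ) + 1) ^ (-(u s + 1)) * (n + 1) := by
    rw [← zpow_add_one₀ (by positivity)]
    ring_nf
  rw [hs, show -(u t - 1) = -u t + 1 by ring, zpow_add_one₀ (by positivity)] at hdiff
  have := zpow_lt_zpow_right₀ hM (show -u t < -(u s + 1) by omega)
  nlinarith

lemma potential_transfer_eq {u : Fin n → ℤ} {s t : Fin n} (hst : u t = u s + 1) :
    potential (u + Pi.single s 1 - Pi.single t 1) = potential u := by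
  have hne : s ≠ t := by rintro rfl; omega
  have hdiff := potential_transfer_sub hne u
  rw [show -(u s + 1) = -u t by omega, show -(u t - 1) = -u s by omega] at hdiff
  linarith

lemma potential_lt_of_toLex_lt {a b : Fin n → ℤ} (hb : Monotone b) (h : toLex a < toLex b) :
    potential b < potential a := by
  obtain ⟨k, hlow, hk⟩ := h
  replace hlow : ∀ i < k, a i = b i := hlow
  replace hk : a k < b k := hk
  set M : ℚ := n + 1
  have hM : 1 < M := one_lt_natCast_add_one_of_fin k
  have hsplit (c : Fin n → ℤ) : potential c =
      ∑ i ∈ univ.filter (· < k), M ^ (-c i) + ∑ i ∈ univ.filter (¬ · < k), M ^ (-c i) :=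
    (sum_filter_add_sum_filter_not _ _ _).symm
  have hlow' : ∑ i ∈ univ.filter (· < k), M ^ (-b i) = ∑ i ∈ univ.filter (· < k), M ^ (-a i) :=
    sum_congr rfl fun i hi => by rw [hlow i (mem_filter.1 hi).2]
  have hhigh : ∑ i ∈ univ.filter (¬ · < k), M ^ (-b i) < ∑ i ∈ univ.filter (¬ · < k), M ^ (-a i) :=
    calc ∑ i ∈ univ.filter (¬ · < k), M ^ (-b i)
        ≤ ∑ i ∈ univ.filter (¬ · < k), M ^ (-a k - 1) := sum_le_sum fun i hi => by
          have := hb (not_lt.1 (mem_filter.1 hi).2)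
          exact zpow_le_zpow_right₀ hM.le (by omega)
      _ ≤ n * M ^ (-a k - 1) := by
          rw [sum_const, nsmul_eq_mul]
          gcongr
          exact_mod_cast (card_filter_le _ _).trans (card_fin n).le
      _ < M ^ (-a k) := by
          have : 0 < M ^ (-a k - 1) := by positivity
          have hsucc : M ^ (-a k) = M ^ (-a k - 1) * (n + 1) := by
            rw [← zpow_add_one₀ (by positivity), sub_add_cancel]
          rw [hsucc]
          linarith
      _ ≤ ∑ i ∈ univ.filter (¬ · < k), M ^ (-a i) :=
          single_le_sum (f := fun i => M ^ (-a i)) (fun i _ => by positivity)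
            (mem_filter.2 ⟨mem_univ k, lt_irrefl k⟩)
  rw [hsplit a, hsplit b, hlow']
  linarith

end Potential

section ExchangeSet

variable {n : ℕ}

/-- A one-sided version of the exchange axiom of M♮-convex sets of integer vectors. -/
def HasExchange (U : Set (Fin n → ℤ)) : Prop :=
  ∀ x ∈ U, ∀ y ∈ U, ∀ s, x s < y s →
    x + Pi.single s 1 ∈ U ∨ ∃ t, y t < x t ∧ x + Pi.single s 1 - Pi.single t 1 ∈ U

def IsPigouDaltonOptimal (U : Set (Fin n → ℤ)) (x : Fin n → ℤ) : Prop :=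
  (∀ s, x + Pi.single s 1 ∉ U) ∧
    ∀ s t, x s + 2 ≤ x t → x + Pi.single s 1 - Pi.single t 1 ∉ U

lemma natAbs_sum_transfer_lt {x w : Fin n → ℤ} {s t : Fin n} (hs : w s < x s) (ht : x t < w t) :
    ∑ i, (x i - (w + Pi.single s 1 - Pi.single t 1 : Fin n → ℤ) i).natAbs <
      ∑ i, (x i - w i).natAbs := by
  have hst : s ≠ t := by rintro rfl; omega
  refine sum_lt_sum (fun i _ => ?_) ⟨s, mem_univ s, by rw [add_single_sub_single_apply_left hst]; omega⟩
  simp only [Pi.add_apply, Pi.sub_apply, Pi.single_apply]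
  split_ifs <;> subst_vars <;> omega

/-- Compare `x` with a potential minimiser `w` as close to `x` as possible, and let `s` minimise
`w s` among the agents with `x s < w s`. Exchanging from `x` towards `w` at `s`, and then from `w`
towards `x`, yields an agent `s'` with `x s' < w s'` and `w s' < w s`, unless one of the exchanges
contradicts the choice of `x` or of `w`. -/
theorem HasExchange.potential_le {U : Set (Fin n → ℤ)} (hU : HasExchange U) (hfin : U.Finite)
    {x : Fin n → ℤ} (hx : x ∈ U) (hopt : IsPigouDaltonOptimal U x) {y : Fin n → ℤ} (hy : y ∈ U) :
    potential x ≤ potential y := by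
  obtain ⟨w, hw, hwmin⟩ := U.exists_min_image
    (fun w => toLex (potential w, ∑ i, (x i - w i).natAbs)) hfin ⟨x, hx⟩
  simp only [Prod.Lex.le_iff] at hwmin
  have hpot (z) (hz : z ∈ U) : potential w ≤ potential z := (hwmin z hz).elim le_of_lt (·.1.le)
  refine le_trans ?_ (hpot y hy)
  by_contra! hwx
  obtain ⟨s, hs, hsmin⟩ := (univ.filter fun i => x i < w i).exists_min_image w <| by
    by_contra! hempty
    refine hwx.not_ge (potential_antitone fun i => ?_)
    simpa using filter_eq_empty_iff.1 hempty (mem_univ i)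
  simp only [mem_filter, mem_univ, true_and] at hs hsmin
  rcases hU x hx w hw s hs with hgain | ⟨t, hwt, htransfer⟩
  · exact hopt.1 s hgain
  have hxt : x t ≤ x s + 1 := by
    by_contra!
    exact hopt.2 s t (by omega) htransfer
  rcases hU w hw x hx t hwt with hgain | ⟨s', hs', htransfer'⟩
  · exact (hpot _ hgain).not_gt (potential_add_single_lt w t)
  rcases lt_trichotomy (w s') (w t + 1) with hlt | heq | hgt
  · exact (hsmin s' hs').not_gt (by omega)
  · have hclose := natAbs_sum_transfer_lt hwt hs'
    rcases hwmin _ htransfer' with h | h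
    · exact h.not_ge (potential_transfer_eq heq).le
    · exact h.2.not_gt hclose
  · exact (hpot _ htransfer').not_gt (potential_transfer_lt (by omega))

end ExchangeSet

lemma Finset.prod_lt_prod_of_eqOn_sdiff {ι R : Type*} [DecidableEq ι] [CommSemiring R]
    [PartialOrder R] [IsStrictOrderedRing R] {P D : Finset ι} {f g : ι → R} (hD : D ⊆ P)
    (hf : ∀ i ∈ P, 0 < f i) (heq : ∀ i ∈ P \ D, f i = g i)
    (hlt : ∏ i ∈ D, f i < ∏ i ∈ D, g i) : ∏ i ∈ P, f i < ∏ i ∈ P, g i := by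
  rw [← prod_sdiff hD, ← prod_sdiff (f := g) hD, ← prod_congr rfl heq]
  exact mul_lt_mul_of_pos_left hlt (prod_pos fun i hi => hf i (mem_sdiff.1 hi).1)

section Nash

variable {n : ℕ}

def positives (u : Fin n → ℤ) : Finset (Fin n) := univ.filter (0 < u ·)

def nashKey (u : Fin n → ℤ) : ℕ ×ₗ ℤ := toLex (#(positives u), ∏ i ∈ positives u, u i)

lemma nashKey_comp_perm (u : Fin n → ℤ) (σ : Equiv.Perm (Fin n)) :
    nashKey (u ∘ σ) = nashKey u := by
  simp only [nashKey, positives, card_filter, prod_filter, Function.comp_apply]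
  rw [Equiv.sum_comp σ (fun i => if 0 < u i then 1 else 0),
    Equiv.prod_comp σ (fun i => if 0 < u i then u i else 1)]

/-- Either some entry in `D` becomes positive, or the positive entries stay the same and their
product grows. -/
lemma nashKey_lt_of_eqOn_compl {u w : Fin n → ℤ} {D : Finset (Fin n)}
    (hout : ∀ i ∉ D, w i = u i) (hw : ∀ i ∈ D, 0 < w i)
    (hprod : ∏ i ∈ D, u i < ∏ i ∈ D, w i) : nashKey u < nashKey w := by
  have hmem {c : Fin n → ℤ} {i : Fin n} : i ∈ positives c ↔ 0 < c i := by simp [positives]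
  have hsub : positives u ⊆ positives w := fun i hi => by
    by_cases hiD : i ∈ D
    · exact hmem.2 (hw i hiD)
    · exact hmem.2 (hout i hiD ▸ hmem.1 hi)
  rw [nashKey, nashKey, Prod.Lex.toLex_lt_toLex]
  by_cases hD : ∀ i ∈ D, 0 < u i
  · have hP : positives w = positives u := subset_antisymm (fun i hi => by
      by_cases hiD : i ∈ D
      · exact hmem.2 (hD i hiD)
      · exact hmem.2 (hout i hiD ▸ hmem.1 hi)) hsub
    refine Or.inr ⟨by rw [hP], hP ▸ prod_lt_prod_of_eqOn_sdiff (fun i hi => hmem.2 (hD i hi))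
      (fun i hi => hmem.1 hi) (fun i hi => (hout i (mem_sdiff.1 hi).2).symm) hprod⟩
  · push Not at hD
    obtain ⟨i, hiD, hi⟩ := hD
    exact Or.inl (card_lt_card ((ssubset_iff_of_subset hsub).2
      ⟨i, hmem.2 (hw i hiD), fun h => (hmem.1 h).not_ge hi⟩))

lemma nashKey_lt_add_single {u : Fin n → ℤ} (hu : ∀ i, 0 ≤ u i) (s : Fin n) :
    nashKey u < nashKey (u + Pi.single s 1) :=
  nashKey_lt_of_eqOn_compl (D := {s}) (fun i hi => by simp [notMem_singleton.1 hi])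
    (by simpa using by linarith [hu s]) (by simp)

lemma nashKey_lt_transfer {u : Fin n → ℤ} (hu : ∀ i, 0 ≤ u i) {s t : Fin n}
    (hst : u s + 2 ≤ u t) : nashKey u < nashKey (u + Pi.single s 1 - Pi.single t 1) := by
  have hne : s ≠ t := by rintro rfl; omega
  have hs := hu s
  refine nashKey_lt_of_eqOn_compl (D := {s, t}) (fun i hi => ?_) (fun i hi => ?_) ?_
  · simp only [mem_insert, mem_singleton, not_or] at hi
    exact add_single_sub_single_apply_of_ne hi.1 hi.2
  · rcases mem_insert.1 hi with rfl | hi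
    · rw [add_single_sub_single_apply_left hne]; omega
    · rw [mem_singleton.1 hi, add_single_sub_single_apply_right hne]; omega
  · rw [prod_pair hne, prod_pair hne, add_single_sub_single_apply_left hne,
      add_single_sub_single_apply_right hne]
    nlinarith

end Nash

section Leximin

variable {n : ℕ} {v : Fin n → Finset O → ℤ}

lemma sVec_eq_comp (v : Fin n → Finset O → ℤ) (A : Fin n → Finset O) :
    sVec v A = utility v A ∘ Tuple.sort (utility v A) := rfl

lemma toLex_sVec_le_of_potential_le {A B : Fin n → Finset O}
    (h : potential (utility v A) ≤ potential (utility v B)) :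
    toLex (sVec v B) ≤ toLex (sVec v A) := by
  refine not_lt.1 fun hlt => h.not_gt ?_
  rw [sVec_eq_comp, sVec_eq_comp] at hlt
  simpa only [potential_comp_perm] using
    potential_lt_of_toLex_lt (Tuple.monotone_sort (utility v B)) hlt

variable [DecidableEq O]

lemma isMNW_iff {A : Fin n → Finset O} :
    IsMNW v A ↔ IsAlloc A ∧ ∀ B, IsAlloc B → nashKey (utility v B) ≤ nashKey (utility v A) := by
  simp only [IsMNW, nashKey, Prod.Lex.toLex_le_toLex]
  refine and_congr_right fun _ => ⟨fun h B hB => ?_, fun h => ⟨fun B hB => ?_, fun B hB hc => ?_⟩⟩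
  · exact (h.1 B hB).lt_or_eq.imp_right fun hc => ⟨hc, h.2 B hB hc⟩
  · exact (h B hB).elim le_of_lt (·.1.le)
  · exact (h B hB).elim (absurd hc ·.ne) (·.2)

lemma exists_isMNW [Fintype O] (v : Fin n → Finset O → ℤ) : ∃ A, IsMNW v A := by
  obtain ⟨A, hA, hmax⟩ := Set.exists_max_image {A : Fin n → Finset O | IsAlloc A}
    (fun A => nashKey (utility v A)) (Set.toFinite _)
    ⟨fun _ => ∅, fun _ _ _ => disjoint_empty_left ∅⟩
  exact ⟨A, isMNW_iff.2 ⟨hA, hmax⟩⟩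

lemma IsMNW.of_sVec_eq {A B : Fin n → Finset O} (hB : IsMNW v B) (hA : IsAlloc A)
    (h : sVec v A = sVec v B) : IsMNW v A := by
  have hkey : nashKey (utility v A) = nashKey (utility v B) := by
    rw [← nashKey_comp_perm (utility v A) (Tuple.sort (utility v A)), ← sVec_eq_comp, h,
      sVec_eq_comp, nashKey_comp_perm]
  exact isMNW_iff.2 ⟨hA, hkey ▸ (isMNW_iff.1 hB).2⟩

def achievable (v : Fin n → Finset O → ℤ) : Set (Fin n → ℤ) := utility v '' {A | IsAlloc A}

variable (hv : ∀ i, IsMatroidRank (v i))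
include hv

lemma hasExchange_achievable : HasExchange (achievable v) := by
  rintro _ ⟨A, hA, rfl⟩ _ ⟨B, hB, rfl⟩ s hs
  obtain ⟨C, hC, hgain | ⟨t, ht, htransfer⟩⟩ := exists_exchange hv hA hB hs
  · exact Or.inl ⟨C, hC, hgain⟩
  · exact Or.inr ⟨t, ht, C, hC, htransfer⟩

lemma IsMNW.isPigouDaltonOptimal {A : Fin n → Finset O} (hA : IsMNW v A) :
    IsPigouDaltonOptimal (achievable v) (utility v A) := by
  have hmax := (isMNW_iff.1 hA).2
  have hu (i : Fin n) : 0 ≤ utility v A i := (hv i).nonneg _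
  refine ⟨fun s ⟨C, hC, hgain⟩ => ?_, fun s t hst ⟨C, hC, htransfer⟩ => ?_⟩
  · exact (hmax C hC).not_gt (hgain ▸ nashKey_lt_add_single hu s)
  · exact (hmax C hC).not_gt (htransfer ▸ nashKey_lt_transfer hu hst)

lemma IsMNW.toLex_sVec_le [Fintype O] {A B : Fin n → Finset O} (hA : IsMNW v A)
    (hB : IsAlloc B) : toLex (sVec v B) ≤ toLex (sVec v A) :=
  toLex_sVec_le_of_potential_le <| (hasExchange_achievable hv).potential_le
    ((Set.toFinite _).image _) ⟨A, hA.1, rfl⟩ (hA.isPigouDaltonOptimal hv) ⟨B, hB, rfl⟩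

end Leximin

end

/-- For matroid rank valuations, an allocation is leximin iff
it is a maximum Nash welfare allocation. -/
theorem leximin_iff_MNW
    {O : Type*} [DecidableEq O] [Fintype O] {n : ℕ}
    (v : Fin n → Finset O → ℤ)
    (h0 : ∀ i, v i ∅ = 0)
    (hbin : ∀ i (S : Finset O) (o : O), o ∉ S →
      v i (insert o S) - v i S = 0 ∨ v i (insert o S) - v i S = 1)
    (hsub : ∀ i (S T : Finset O), S ⊆ T → ∀ o ∉ T,
      v i (insert o T) - v i T ≤ v i (insert o S) - v i S)
    (A : Fin n → Finset O) :
    (IsAlloc A ∧ ∀ B : Fin n → Finset O, IsAlloc B →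
        toLex (sVec v B) ≤ toLex (sVec v A)) ↔ IsMNW v A := by
  have hv (i : Fin n) : IsMatroidRank (v i) := ⟨h0 i, hbin i, hsub i⟩
  refine ⟨fun ⟨hA, hleximin⟩ => ?_, fun hA => ⟨hA.1, fun B hB => hA.toLex_sVec_le hv hB⟩⟩
  obtain ⟨B, hB⟩ := exists_isMNW v
  have hAB : sVec v A = sVec v B :=
    toLex_inj.1 ((hB.toLex_sVec_le hv hA).antisymm (hleximin B hB.1))
  exact hB.of_sVec_eq hA hAB
end

section
/- Suppose each of n agents i has a submodular valuation v_i on subsets of a finite set O of items with v_i(∅) = 0 and subjective binary marginal gains determined by a constant λ_i > 0. Let A be a clean allocation under which agent i envies agent j up to more than 1 item, i.e. A_j ≠ ∅ and v_i(A_i) < v_i(A_j ∖ {o}) for every o ∈ A_j. Then |A_j| ≥ |A_i| + 2. -/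
/-- For submodular valuations with subjective binary marginal
gains, if under a clean allocation agent `i` envies agent `j` up to more than
one item, then `|A j| ≥ |A i| + 2`. -/
theorem subjective_binary_envy_card_gap
    {O : Type*} [DecidableEq O] [Fintype O] {n : ℕ}
    (v : Fin n → Finset O → ℝ) (lam : Fin n → ℝ)
    (hlam : ∀ i, 0 < lam i)
    (h0 : ∀ i, v i ∅ = 0)
    (hbin : ∀ i (S : Finset O) (o : O), o ∉ S →
      v i (insert o S) - v i S = 0 ∨ v i (insert o S) - v i S = lam i)
    (hsub : ∀ i (S T : Finset O), S ⊆ T → ∀ o ∉ T,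
      v i (insert o T) - v i T ≤ v i (insert o S) - v i S)
    (A : Fin n → Finset O)
    (hdisj : ∀ i j, i ≠ j → Disjoint (A i) (A j))
    (hclean : ∀ i, ∀ o ∈ A i, 0 < v i (A i) - v i (A i \ {o}))
    (i j : Fin n)
    (hne : (A j).Nonempty)
    (henvy : ∀ o ∈ A j, v i (A i) < v i (A j \ {o})) :
    (A i).card + 2 ≤ (A j).card := by
  -- Upper bound: v i S ≤ lam i * |S| for every S.
  have hupper : ∀ S : Finset O, v i S ≤ lam i * S.card := by
    intro S
    induction S using Finset.induction_on with
    | empty => simp [h0]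
    | @insert a S ha ih =>
      have := hbin i S a ha
      have hcard : ((insert a S).card : ℝ) = S.card + 1 := by
        rw [Finset.card_insert_of_notMem ha]; push_cast; ring
      rcases this with h | h <;> nlinarith [(hlam i).le]
  -- Clean value: v i S = lam i * |S| for every S ⊆ A i.
  have hclean' : ∀ S : Finset O, S ⊆ A i → v i S = lam i * S.card := by
    intro S
    induction S using Finset.induction_on with
    | empty => intro _; simp [h0]
    | @insert a S ha ih =>
      intro hsub'
      have haA : a ∈ A i := hsub' (Finset.mem_insert_self a S)
      have hSA : S ⊆ A i := fun x hx => hsub' (Finset.mem_insert_of_mem hx)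
      have hSAa : S ⊆ A i \ {a} := by
        intro x hx
        exact Finset.mem_sdiff.2 ⟨hSA hx, by simp; rintro rfl; exact ha hx⟩
      have haAa : a ∉ A i \ {a} := by simp
      have hins : insert a (A i \ {a}) = A i := by
        rw [Finset.insert_eq]
        rw [Finset.union_sdiff_of_subset]
        · simp [haA]
      have hge : 0 < v i (insert a S) - v i S := by
        have := hsub i S (A i \ {a}) hSAa a haAa
        rw [hins] at this
        exact lt_of_lt_of_le (hclean i a haA) this
      have hmarg : v i (insert a S) - v i S = lam i := by
        rcases hbin i S a ha with h | h
        · linarith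
        · exact h
      have hcard : ((insert a S).card : ℝ) = S.card + 1 := by
        rw [Finset.card_insert_of_notMem ha]; push_cast; ring
      have := ih hSA
      rw [hcard]; linarith
  -- Now conclude.
  obtain ⟨o, ho⟩ := hne
  have h1 : v i (A i) = lam i * (A i).card := hclean' _ (le_refl _)
  have h2 := henvy o ho
  have h3 := hupper (A j \ {o})
  have hcard : ((A j \ {o}).card : ℝ) = (A j).card - 1 := by
    rw [Finset.card_sdiff_of_subset (by simpa using ho)]
    have : 1 ≤ (A j).card := Finset.card_pos.2 ⟨o, ho⟩
    simp only [Finset.card_singleton]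
    push_cast [this]
    ring
  have hlt : (lam i) * (A i).card < lam i * ((A j).card - 1) := by
    rw [← hcard]; linarith
  have hlt2 : ((A i).card : ℝ) < (A j).card - 1 :=
    lt_of_mul_lt_mul_left (by linarith) (hlam i).le
  have h4 : ((A i).card : ℝ) + 1 < (A j).card := by linarith
  have h5 : (A i).card + 1 < (A j).card := by exact_mod_cast h4
  omega
end

section
/- Suppose each of n agents has a submodular valuation v_i on subsets of a finite set O of items with v_i(∅) = 0 and v_i nonnegative. Then every allocation that is envy-free up to one good (EF1) is also marginally envy-free up to one item (MEF1). -/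
/-- For nonnegative submodular valuations, every EF1
allocation is MEF1 (marginally envy-free up to one item). -/
theorem EF1_implies_MEF1
    {O : Type*} [DecidableEq O] [Fintype O] {n : ℕ}
    (v : Fin n → Finset O → ℝ)
    (h0 : ∀ i, v i ∅ = 0)
    (hnonneg : ∀ i (S : Finset O), 0 ≤ v i S)
    (hsub : ∀ i (S T : Finset O), S ⊆ T → ∀ o ∉ T,
      v i (insert o T) - v i T ≤ v i (insert o S) - v i S)
    (A : Fin n → Finset O)
    (hdisj : ∀ i j, i ≠ j → Disjoint (A i) (A j))
    (hEF1 : ∀ i j, v i (A j) ≤ v i (A i) ∨ ∃ o ∈ A j, v i (A j \ {o}) ≤ v i (A i)) :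
    ∀ i j, v i (A i) < v i (A j) →
      ∃ o ∈ A j, v i (A i ∪ (A j \ {o})) - v i (A i) ≤ v i (A i) := by
  -- Key submodularity lemma: adding a set R (disjoint from S) to S gains at most
  -- what adding it to a subset B ⊆ S gains.
  have key : ∀ i (B S : Finset O), B ⊆ S → ∀ R : Finset O, Disjoint R S →
      v i (S ∪ R) - v i S ≤ v i (B ∪ R) - v i B := by
    intro i B S hBS R
    induction R using Finset.induction_on with
    | empty => simp
    | @insert a R ha ih =>
      intro hdisjR
      have haS : a ∉ S := fun h =>
        (Finset.disjoint_left.mp hdisjR (Finset.mem_insert_self a R)) h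
      have hdR : Disjoint R S :=
        Finset.disjoint_of_subset_left (Finset.subset_insert a R) hdisjR
      have h1 : S ∪ insert a R = insert a (S ∪ R) := Finset.union_insert ..
      have h2 : B ∪ insert a R = insert a (B ∪ R) := Finset.union_insert ..
      have hsubset : B ∪ R ⊆ S ∪ R := Finset.union_subset_union_left hBS
      have haSR : a ∉ S ∪ R := by simp [haS, ha]
      have hstep := hsub i (B ∪ R) (S ∪ R) hsubset a haSR
      have hih := ih hdR
      rw [h1, h2]
      linarith
  -- Consequence: v(S ∪ T) - v(S) ≤ v(T) for any S, T.
  have subadd : ∀ i (S T : Finset O), v i (S ∪ T) - v i S ≤ v i T := by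
    intro i S T
    have hST : S ∪ (T \ S) = S ∪ T := Finset.union_sdiff_self_eq_union
    have hIT : (S ∩ T) ∪ (T \ S) = T := by
      ext x
      simp only [Finset.mem_union, Finset.mem_inter, Finset.mem_sdiff]
      tauto
    have hd : Disjoint (T \ S) S := Finset.sdiff_disjoint
    have := key i (S ∩ T) S Finset.inter_subset_left (T \ S) hd
    rw [hST, hIT] at this
    have := hnonneg i (S ∩ T)
    linarith
  intro i j hlt
  rcases hEF1 i j with h | ⟨o, ho, hle⟩
  · linarith
  · refine ⟨o, ho, ?_⟩
    have := subadd i (A i) (A j \ {o})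
    linarith
end

section
/- Suppose each of n agents has a submodular valuation v_i with binary marginal gains on subsets of a finite set O of items (v_i(∅) = 0). Then every allocation that is equitable up to one item (EQ1) and Pareto optimal is a leximin allocation. -/
/-- Equitability up to one item. -/
def EQ1 {O : Type*} [DecidableEq O] {n : ℕ} (v : Fin n → Finset O → ℤ)
    (A : Fin n → Finset O) : Prop :=
  ∀ i j, (A j).Nonempty → ∃ o ∈ A j, v j (A j \ {o}) ≤ v i (A i)

section Aux
variable {O : Type*} [DecidableEq O]

lemma aux_le_union (v : Finset O → ℤ)
    (hbin : ∀ (S : Finset O) (o : O), o ∉ S →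
      v (insert o S) - v S = 0 ∨ v (insert o S) - v S = 1) :
    ∀ (U S : Finset O), v S ≤ v (S ∪ U) := by
  intro U
  induction U using Finset.induction_on with
  | empty => simp
  | @insert o U ho ih =>
      intro S
      have h1 : v S ≤ v (S ∪ U) := ih S
      rw [Finset.union_insert]
      by_cases hm : o ∈ S ∪ U
      · rw [Finset.insert_eq_self.mpr hm]; exact h1
      · rcases hbin (S ∪ U) o hm with h | h <;> omega

lemma aux_mono (v : Finset O → ℤ)
    (hbin : ∀ (S : Finset O) (o : O), o ∉ S →
      v (insert o S) - v S = 0 ∨ v (insert o S) - v S = 1)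
    {S T : Finset O} (h : S ⊆ T) : v S ≤ v T := by
  have := aux_le_union v hbin T S
  rwa [Finset.union_eq_right.mpr h] at this

lemma aux_nonneg (v : Finset O → ℤ) (h0 : v ∅ = 0)
    (hbin : ∀ (S : Finset O) (o : O), o ∉ S →
      v (insert o S) - v S = 0 ∨ v (insert o S) - v S = 1)
    (S : Finset O) : 0 ≤ v S := by
  have := aux_mono v hbin (Finset.empty_subset S)
  omega

lemma aux_erase (v : Finset O → ℤ)
    (hbin : ∀ (S : Finset O) (o : O), o ∉ S →
      v (insert o S) - v S = 0 ∨ v (insert o S) - v S = 1)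
    {S : Finset O} {o : O} (ho : o ∈ S) : v S - 1 ≤ v (S.erase o) := by
  have h1 : o ∉ S.erase o := Finset.notMem_erase o S
  have h2 : insert o (S.erase o) = S := Finset.insert_erase ho
  rcases hbin (S.erase o) o h1 with h | h <;> rw [h2] at h <;> omega

lemma aux_exchange (v : Finset O → ℤ)
    (hbin : ∀ (S : Finset O) (o : O), o ∉ S →
      v (insert o S) - v S = 0 ∨ v (insert o S) - v S = 1)
    (hsub : ∀ (S T : Finset O), S ⊆ T → ∀ o ∉ T,
      v (insert o T) - v T ≤ v (insert o S) - v S)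
    {S T : Finset O} (h : v S < v (S ∪ T)) :
    ∃ o ∈ T, o ∉ S ∧ v (insert o S) = v S + 1 := by
  by_contra hc
  push_neg at hc
  have hflat : ∀ o ∈ T, o ∉ S → v (insert o S) = v S := by
    intro o hoT hoS
    rcases hbin S o hoS with h' | h'
    · omega
    · exact absurd (by omega) (hc o hoT hoS)
  have : v (S ∪ T) ≤ v S := by
    clear h hc
    induction T using Finset.induction_on with
    | empty => simp
    | @insert a T ha ih =>
        have hT : ∀ o ∈ T, o ∉ S → v (insert o S) = v S := fun o h1 h2 =>
          hflat o (Finset.mem_insert_of_mem h1) h2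
        rw [Finset.union_insert]
        by_cases hm : a ∈ S ∪ T
        · rw [Finset.insert_eq_self.mpr hm]; exact ih hT
        · have haS : a ∉ S := fun h => hm (Finset.mem_union_left _ h)
          have h1 := hsub S (S ∪ T) Finset.subset_union_left a hm
          rw [hflat a (Finset.mem_insert_self a T) haS] at h1
          have := ih hT
          omega
  omega

end Aux

/-- For matroid rank valuations, every EQ1 and Pareto optimal
allocation is leximin. -/
theorem EQ1_paretoOpt_implies_leximin
    {O : Type*} [DecidableEq O] [Fintype O] {n : ℕ}
    (v : Fin n → Finset O → ℤ)
    (h0 : ∀ i, v i ∅ = 0)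
    (hbin : ∀ i (S : Finset O) (o : O), o ∉ S →
      v i (insert o S) - v i S = 0 ∨ v i (insert o S) - v i S = 1)
    (hsub : ∀ i (S T : Finset O), S ⊆ T → ∀ o ∉ T,
      v i (insert o T) - v i T ≤ v i (insert o S) - v i S)
    (A : Fin n → Finset O)
    (hA : IsAlloc A)
    (hEQ1 : EQ1 v A)
    (hPO : ¬ ∃ B : Fin n → Finset O, IsAlloc B ∧ ParetoDom v B A) :
    ∀ B : Fin n → Finset O, IsAlloc B → toLex (sVec v B) ≤ toLex (sVec v A) := by
  classical
  -- Step 1: A maximizes utilitarian welfare.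
  have hsum : ∀ B : Fin n → Finset O, IsAlloc B →
      (∑ i, v i (B i)) ≤ ∑ i, v i (A i) := by
    by_contra hc
    push_neg at hc
    obtain ⟨B0, hB0a, hB0⟩ := hc
    set s : Finset (Fin n → Finset O) :=
      Finset.univ.filter (fun B => IsAlloc B ∧ (∑ i, v i (A i)) < ∑ i, v i (B i)) with hs
    have hB0s : B0 ∈ s := by simp [hs, hB0a, hB0]
    obtain ⟨B, hBs, hBmin⟩ := Finset.exists_min_image s
      (fun B => ∑ i, ((A i \ B i).card + (B i \ A i).card)) ⟨B0, hB0s⟩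
    rw [hs, Finset.mem_filter] at hBs
    obtain ⟨-, hBalloc, hBsum⟩ := hBs
    have hpt : ∀ j, v j (A j) ≤ v j (B j) := by
      intro j
      by_contra hj
      push_neg at hj
      have h1 : v j (B j) < v j (B j ∪ A j) :=
        lt_of_lt_of_le hj (aux_mono (v j) (hbin j) Finset.subset_union_right)
      obtain ⟨o, hoAj, hoBj, hogain⟩ := aux_exchange (v j) (hbin j) (hsub j) h1
      -- o belongs to no A i with i ≠ j
      have hoAi : ∀ i, i ≠ j → o ∉ A i := fun i hij hmem =>
        (Finset.disjoint_left.mp (hA i j hij)) hmem hoAj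
      set C : Fin n → Finset O :=
        fun i => if i = j then insert o (B j) else (B i).erase o with hC
      have hCj : C j = insert o (B j) := by simp [hC]
      have hCi : ∀ i, i ≠ j → C i = (B i).erase o := by
        intro i hi; simp [hC, hi]
      have hsubC : ∀ i, i ≠ j → C i ⊆ B i := by
        intro i hi; rw [hCi i hi]; exact Finset.erase_subset _ _
      have hCalloc : IsAlloc C := by
        have hdj : ∀ i, i ≠ j → Disjoint (C j) (C i) := by
          intro i hi
          rw [hCj, Finset.disjoint_insert_left]
          constructor
          · rw [hCi i hi]; exact Finset.notMem_erase o (B i)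
          · exact Disjoint.mono_right (hsubC i hi) (hBalloc j i (Ne.symm hi))
        intro i i' hne
        rcases eq_or_ne i j with rfl | hij
        · exact hdj i' (Ne.symm hne)
        rcases eq_or_ne i' j with rfl | hij'
        · exact (hdj i hij).symm
        · exact Disjoint.mono (hsubC i hij) (hsubC i' hij') (hBalloc i i' hne)
      -- the sum strictly exceeds that of A
      have hsumC : (∑ i, v i (A i)) < ∑ i, v i (C i) := by
        by_cases hk : ∃ k, k ≠ j ∧ o ∈ B k
        · obtain ⟨k, hkj, hok⟩ := hk
          have hpoint : ∀ i : Fin n,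
              v i (B i) + (if i = j then 1 else 0) ≤ v i (C i) + (if i = k then 1 else 0) := by
            intro i
            rcases eq_or_ne i j with rfl | hij
            · rw [hCj, hogain, if_pos rfl, if_neg (Ne.symm hkj)]
              omega
            rcases eq_or_ne i k with rfl | hik
            · rw [hCi i hij, if_neg hij, if_pos rfl]
              have := aux_erase (v i) (hbin i) hok
              omega
            · have hoB : o ∉ B i := fun hmem =>
                (Finset.disjoint_left.mp (hBalloc k i (Ne.symm hik))) hok hmem
              rw [hCi i hij, Finset.erase_eq_of_notMem hoB, if_neg hij, if_neg hik]
          have h2 := Finset.sum_le_sum (fun i (_ : i ∈ Finset.univ) => hpoint i)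
          rw [Finset.sum_add_distrib, Finset.sum_add_distrib,
            Finset.sum_ite_eq' Finset.univ j (fun _ => (1 : ℤ)),
            Finset.sum_ite_eq' Finset.univ k (fun _ => (1 : ℤ))] at h2
          simp only [Finset.mem_univ, if_pos] at h2
          omega
        · push_neg at hk
          have hpoint : ∀ i : Fin n,
              v i (C i) = v i (B i) + (if i = j then 1 else 0) := by
            intro i
            rcases eq_or_ne i j with rfl | hij
            · rw [hCj, hogain, if_pos rfl]
            · have hoB : o ∉ B i := hk i hij
              rw [hCi i hij, Finset.erase_eq_of_notMem hoB, if_neg hij]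
              ring
          have h2 : (∑ i, v i (C i)) = (∑ i, v i (B i)) + 1 := by
            rw [Finset.sum_congr rfl (fun i _ => hpoint i), Finset.sum_add_distrib,
              Finset.sum_ite_eq' Finset.univ j (fun _ => (1 : ℤ))]
            simp
          omega
      -- the potential strictly decreases
      have hphi : (∑ i, ((A i \ C i).card + (C i \ A i).card)) <
          ∑ i, ((A i \ B i).card + (B i \ A i).card) := by
        have hstrj : (A j \ C j).card + (C j \ A j).card <
            (A j \ B j).card + (B j \ A j).card := by
          have e1 : A j \ C j = (A j \ B j).erase o := by
            rw [hCj]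
            ext a
            simp only [Finset.mem_sdiff, Finset.mem_insert, Finset.mem_erase]
            tauto
          have e2 : C j \ A j = B j \ A j := by
            rw [hCj]
            ext a
            rcases eq_or_ne a o with rfl | hao
            · simp [hoAj, hoBj]
            · simp [Finset.mem_sdiff, hao]
          rw [e1, e2]
          have : ((A j \ B j).erase o).card < (A j \ B j).card :=
            Finset.card_erase_lt_of_mem (Finset.mem_sdiff.mpr ⟨hoAj, hoBj⟩)
          omega
        apply Finset.sum_lt_sum
        · intro i _
          rcases eq_or_ne i j with rfl | hij
          · exact le_of_lt hstrj
          · have e1 : A i \ C i = A i \ B i := by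
              rw [hCi i hij]
              ext a
              rcases eq_or_ne a o with rfl | hao
              · simp [hoAi i hij]
              · simp [Finset.mem_erase, hao]
            have e2 : C i \ A i ⊆ B i \ A i := by
              rw [hCi i hij]
              exact Finset.sdiff_subset_sdiff (Finset.erase_subset _ _) (le_refl _)
            rw [e1]
            exact Nat.add_le_add (le_refl _) (Finset.card_le_card e2)
        · exact ⟨j, Finset.mem_univ j, hstrj⟩
      have hCs : C ∈ s := by
        rw [hs, Finset.mem_filter]
        exact ⟨Finset.mem_univ C, hCalloc, hsumC⟩
      exact absurd (hBmin C hCs) (by omega)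
    refine hPO ⟨B, hBalloc, hpt, ?_⟩
    by_contra hstrict
    push_neg at hstrict
    have := Finset.sum_le_sum (fun i (_ : i ∈ Finset.univ) => hstrict i)
    omega
  -- Step 2: spread at most 1
  have hspread : ∀ i j, v j (A j) ≤ v i (A i) + 1 := by
    intro i j
    by_cases hne : (A j).Nonempty
    · obtain ⟨o, hoAj, hle⟩ := hEQ1 i j hne
      have h1 : v j (A j) - 1 ≤ v j ((A j).erase o) := aux_erase (v j) (hbin j) hoAj
      rw [← Finset.erase_eq] at hle
      omega
    · rw [Finset.not_nonempty_iff_eq_empty.mp hne, h0 j]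
      have := aux_nonneg (v i) (h0 i) (hbin i) (A i)
      omega
  -- Step 3: conclude
  intro B hB
  have htri := @trichotomous _ (Pi.Lex (· < ·) (fun {_} => (· < ·)))
    (Pi.isTrichotomous_lex _ _ IsWellFounded.wf) (sVec v A) (sVec v B)
  rcases htri with hlt | heq | hgt
  rotate_left
  · exact le_of_eq (congrArg toLex heq.symm)
  · exact le_of_lt hgt
  exfalso
  obtain ⟨t, hpre, hltt⟩ := hlt
  set a : Fin n → ℤ := sVec v A with ha
  set b : Fin n → ℤ := sVec v B with hb
  have hbmono : Monotone b := Tuple.monotone_sort (fun i => v i (B i))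
  have haspread : ∀ s t : Fin n, a s ≤ a t + 1 := by
    intro s t
    exact hspread (Tuple.sort (fun i => v i (A i)) t) (Tuple.sort (fun i => v i (A i)) s)
  have hsa : (∑ i, a i) = ∑ i, v i (A i) :=
    Equiv.sum_comp (Tuple.sort (fun i => v i (A i))) (fun i => v i (A i))
  have hsb : (∑ i, b i) = ∑ i, v i (B i) :=
    Equiv.sum_comp (Tuple.sort (fun i => v i (B i))) (fun i => v i (B i))
  have hkey : ∀ s : Fin n, a s + (if s = t then 1 else 0) ≤ b s := by
    intro s
    rcases lt_trichotomy s t with h | rfl | h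
    · rw [if_neg (ne_of_lt h), hpre s h]; omega
    · rw [if_pos rfl]; omega
    · rw [if_neg (ne_of_gt h)]
      have h4 : b t ≤ b s := hbmono (le_of_lt h)
      have h5 := haspread s t
      omega
  have h2 := Finset.sum_le_sum (fun s (_ : s ∈ Finset.univ) => hkey s)
  rw [Finset.sum_add_distrib, Finset.sum_ite_eq' Finset.univ t (fun _ => (1 : ℤ))] at h2
  simp only [Finset.mem_univ, if_pos] at h2
  have h3 := hsum B hB
  omega
end

section
/- Suppose each of n agents has a binary additive valuation v_i on subsets of a finite set O of items, and suppose there are no redundant items, i.e. for every item o ∈ O there exists an agent i with v_i({o}) = 1. Then every allocation A that is Pareto optimal and envy-free up to one good (EF1) satisfies the maximin share guarantee: v_i(A_i) ≥ MMS_i for every agent i. -/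
/-- For binary additive valuations without redundant items,
every Pareto optimal EF1 allocation satisfies the maximin share guarantee:
for every agent `i` and every partition of the items into `n` parts, `i`'s
realized value is at least the smallest value (to `i`) of a part. -/
theorem binary_additive_paretoOpt_EF1_implies_MMS
    {O : Type*} [DecidableEq O] [Fintype O] {n : ℕ}
    (v : Fin n → Finset O → ℤ)
    (hbinadd : ∀ i (S : Finset O), v i S = ∑ o ∈ S, v i {o})
    (hbin01 : ∀ i (o : O), v i {o} = 0 ∨ v i {o} = 1)
    (hnored : ∀ o : O, ∃ i : Fin n, v i {o} = 1)
    (A : Fin n → Finset O)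
    (hA : IsAlloc A)
    (hPO : ¬ ∃ B : Fin n → Finset O, IsAlloc B ∧ ParetoDom v B A)
    (hEF1 : EF1 v A) :
    ∀ i : Fin n, ∀ P : Fin n → Finset O,
      (∀ j k, j ≠ k → Disjoint (P j) (P k)) →
      (Finset.univ.biUnion P = Finset.univ) →
      ∃ j : Fin n, v i (P j) ≤ v i (A i) := by
  intro i P hPd hPc
  by_contra hcon
  push_neg at hcon
  have hnn : ∀ o : O, 0 ≤ v i {o} := by
    intro o; rcases hbin01 i o with h | h <;> omega
  have hle1 : ∀ o : O, v i {o} ≤ 1 := by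
    intro o; rcases hbin01 i o with h | h <;> omega
  -- every item valued by i is allocated
  have hall : ∀ o : O, v i {o} = 1 → ∃ k, o ∈ A k := by
    intro o hv
    by_contra hno
    push_neg at hno
    apply hPO
    have hkey : v i (insert o (A i)) = v i {o} + v i (A i) := by
      rw [hbinadd i (insert o (A i)), hbinadd i (A i), Finset.sum_insert (hno i)]
    refine ⟨Function.update A i (insert o (A i)), ?_, ?_, ?_⟩
    · intro k l hkl
      by_cases hk : k = i <;> by_cases hl : l = i
      · exact absurd (hk.trans hl.symm) hkl
      · rw [hk, Function.update_self, Function.update_of_ne hl]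
        exact Finset.disjoint_insert_left.2 ⟨hno l, hA i l (fun h => hl (h.symm))⟩
      · rw [hl, Function.update_self, Function.update_of_ne hk]
        exact Finset.disjoint_insert_right.2 ⟨hno k, hA k i hk⟩
      · rw [Function.update_of_ne hk, Function.update_of_ne hl]
        exact hA k l hkl
    · intro k
      by_cases hk : k = i
      · rw [hk, Function.update_self, hkey]
        have := hnn o; omega
      · rw [Function.update_of_ne hk]
    · refine ⟨i, ?_⟩
      rw [Function.update_self, hkey]
      omega
  -- EF1 bound
  have hEF : ∀ k, v i (A k) ≤ v i (A i) + 1 := by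
    intro k
    rcases hEF1 i k with h | ⟨o, ho, h⟩
    · omega
    · have hsplit : v i (A k \ {o}) + v i {o} = v i (A k) := by
        rw [hbinadd i (A k \ {o}), hbinadd i (A k),
          ← Finset.sum_sdiff (Finset.singleton_subset_iff.2 ho), Finset.sum_singleton]
      have := hle1 o
      omega
  -- partition sum
  have hsumP : ∑ j, v i (P j) = ∑ o : O, v i {o} := by
    rw [Finset.sum_congr rfl fun j (_ : j ∈ Finset.univ) => hbinadd i (P j),
      ← Finset.sum_biUnion (f := fun o => v i {o}) (fun j _ k _ hjk => hPd j k hjk), hPc]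
  -- allocation sum
  set U := Finset.univ.biUnion A with hU
  have hsumA : ∑ k, v i (A k) = ∑ o ∈ U, v i {o} := by
    rw [Finset.sum_congr rfl fun j (_ : j ∈ Finset.univ) => hbinadd i (A j),
      ← Finset.sum_biUnion (f := fun o => v i {o}) (fun j _ k _ hjk => hA j k hjk)]
  have hzero : ∑ o ∈ Finset.univ \ U, v i {o} = 0 := by
    refine Finset.sum_eq_zero fun o ho => ?_
    have hoU : o ∉ U := (Finset.mem_sdiff.1 ho).2
    rcases hbin01 i o with h | h
    · exact h
    · rcases hall o h with ⟨k, hk⟩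
      exact absurd (Finset.mem_biUnion.2 ⟨k, Finset.mem_univ k, hk⟩) hoU
  have htot : ∑ o ∈ Finset.univ \ U, v i {o} + ∑ o ∈ U, v i {o} = ∑ o : O, v i {o} :=
    Finset.sum_sdiff (Finset.subset_univ U)
  -- combine
  have h1 : ∑ j : Fin n, (v i (A i) + 1) ≤ ∑ j, v i (P j) :=
    Finset.sum_le_sum fun j _ => by have := hcon j; omega
  have h2 : ∑ k, v i (A k) < ∑ k : Fin n, (v i (A i) + 1) :=
    Finset.sum_lt_sum (fun k _ => hEF k) ⟨i, Finset.mem_univ i, by omega⟩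
  omega
end
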